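/- arXiv:2501.15951 — 6 statements merged into one kernel-verified Lean document; each statement's English description precedes it below -/
import Mathlib

section
/- For all real v with 0 < v < 1, one has 1/2 - (3/2)v ≤ 1 - 2√(v(1-v)) ≤ 1 - 4v - 2v·log((1-v)/(4v)), with equality in both inequalities if and only if v = 1/5. -/
theorem stmt_0 (v : ℝ) (h0 : 0 < v) (h1 : v < 1) :
    (1/2 - (3/2)*v ≤ 1 - 2*Real.sqrt (v*(1-v)) ∧
     1 - 2*Real.sqrt (v*(1-v)) ≤ 1 - 4*v - 2*v*Real.log ((1-v)/(4*v))) ∧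
    ((1/2 - (3/2)*v = 1 - 2*Real.sqrt (v*(1-v)) ∧
      1 - 2*Real.sqrt (v*(1-v)) = 1 - 4*v - 2*v*Real.log ((1-v)/(4*v))) ↔ v = 1/5) := by
  have hv1 : 0 < 1 - v := by linarith
  have hvv : 0 ≤ v * (1 - v) := by positivity
  have hs : Real.sqrt (v*(1-v)) ^ 2 = v*(1-v) := Real.sq_sqrt hvv
  have hsnn : 0 ≤ Real.sqrt (v*(1-v)) := Real.sqrt_nonneg _
  have ht : 0 < (1-v)/(4*v) := by positivity
  set t : ℝ := (1-v)/(4*v) with ht_def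
  have hsqt : Real.sqrt t ^ 2 = t := Real.sq_sqrt ht.le
  have hsqtnn : 0 ≤ Real.sqrt t := Real.sqrt_nonneg _
  -- sqrt(v(1-v)) = 2v √t
  have hfact : v*(1-v) = (2*v)^2 * t := by
    rw [ht_def]; field_simp; ring
  have hsplit : Real.sqrt (v*(1-v)) = 2*v * Real.sqrt t := by
    rw [hfact, Real.sqrt_mul (sq_nonneg _), Real.sqrt_sq (by linarith)]
  -- key log inequality: log t ≤ 2 √t - 2, strict unless t = 1
  have hlog : Real.log t ≤ 2 * Real.sqrt t - 2 := by
    have h := Real.log_le_sub_one_of_pos (Real.sqrt_pos.mpr ht)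
    rw [Real.log_sqrt ht.le] at h
    linarith
  -- first inequality
  have hsqle : Real.sqrt (v*(1-v)) ≤ (1+3*v)/4 := by
    rw [show (1+3*v)/4 = Real.sqrt (((1+3*v)/4)^2) from (Real.sqrt_sq (by linarith)).symm]
    apply Real.sqrt_le_sqrt
    nlinarith [sq_nonneg (1-5*v)]
  have ineq1 : 1/2 - (3/2)*v ≤ 1 - 2*Real.sqrt (v*(1-v)) := by linarith
  have ineq2 : 1 - 2*Real.sqrt (v*(1-v)) ≤ 1 - 4*v - 2*v*Real.log t := by
    rw [hsplit]
    nlinarith [mul_le_mul_of_nonneg_left hlog h0.le]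
  refine ⟨⟨ineq1, ineq2⟩, ?_, ?_⟩
  · rintro ⟨he1, -⟩
    have h5 : (5*v - 1)^2 = 0 := by nlinarith [hs]
    have := pow_eq_zero_iff (n := 2) (by norm_num) |>.mp h5
    linarith
  · rintro rfl
    have h25 : ((1:ℝ)/5) * (1 - 1/5) = (2/5)^2 := by norm_num
    have hsq : Real.sqrt ((1:ℝ)/5 * (1 - 1/5)) = 2/5 := by
      rw [h25, Real.sqrt_sq (by norm_num)]
    have hl : Real.log ((1 - (1:ℝ)/5)/(4*(1/5))) = 0 := by
      norm_num
    constructor <;> rw [hsq] <;> norm_num [hl]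
end

section
/- Let Q(v) := v·log v - v + 1. For all real b > 1 and all real v ≥ 1, the tail sum ∑_{n ≥ b·v} v^n/n! is strictly less than √b · e^{v(1-Q(b))} / ((b-1)·√(2πv)). -/
open Real Filter

lemma sqrt_pi_le_stirlingSeq (n : ℕ) : Real.sqrt Real.pi ≤ Stirling.stirlingSeq (n + 1) := by
  have h : Filter.Tendsto (fun m => Stirling.stirlingSeq (m + 1)) atTop (nhds (Real.sqrt Real.pi)) :=
    (Filter.tendsto_add_atTop_iff_nat 1).mpr Stirling.tendsto_stirlingSeq_sqrt_pi
  exact Stirling.stirlingSeq'_antitone.le_of_tendsto h n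

lemma stirling_lower {n : ℕ} (hn : 1 ≤ n) :
    Real.sqrt (2 * Real.pi * n) * (n / Real.exp 1) ^ n ≤ (Nat.factorial n : ℝ) := by
  obtain ⟨m, rfl⟩ := Nat.exists_eq_add_of_le hn
  have h := sqrt_pi_le_stirlingSeq m
  rw [Nat.add_comm 1 m] at *
  unfold Stirling.stirlingSeq at h
  have hpos : (0:ℝ) < Real.sqrt (2 * (m+1:ℕ)) * ((m+1:ℕ) / Real.exp 1) ^ (m+1) := by
    positivity
  rw [le_div_iff₀ hpos] at h
  calc Real.sqrt (2 * Real.pi * (m+1:ℕ)) * ((m+1:ℕ) / Real.exp 1) ^ (m+1)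
      = Real.sqrt Real.pi * (Real.sqrt (2 * (m+1:ℕ)) * ((m+1:ℕ) / Real.exp 1) ^ (m+1)) := by
        rw [show 2 * Real.pi * (m+1:ℕ) = Real.pi * (2 * (m+1:ℕ)) by ring,
          Real.sqrt_mul Real.pi_pos.le]
        ring
    _ ≤ _ := h

theorem stmt_2 (b v : ℝ) (hb : 1 < b) (hv : 1 ≤ v) :
    ∑' n : ℕ, (if b*v ≤ (n:ℝ) then v^n / (Nat.factorial n : ℝ) else 0)
      < Real.sqrt b * Real.exp (v * (1 - (b * Real.log b - b + 1)))
        / ((b - 1) * Real.sqrt (2 * Real.pi * v)) := by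
  have hv0 : (0:ℝ) < v := lt_of_lt_of_le one_pos hv
  have hb0 : (0:ℝ) < b := lt_trans one_pos hb
  set N : ℕ := ⌈b * v⌉₊ with hNdef
  have hbv1 : (1:ℝ) ≤ b * v := by nlinarith
  have hN : b * v ≤ (N:ℝ) := Nat.le_ceil _
  have hN1 : 1 ≤ N := Nat.ceil_pos.mpr (by linarith)
  have hNpos : (0:ℝ) < (N:ℝ) := by exact_mod_cast Nat.lt_of_lt_of_le Nat.zero_lt_one hN1
  -- the terms
  set f : ℕ → ℝ := fun n => if b*v ≤ (n:ℝ) then v^n / (Nat.factorial n : ℝ) else 0 with hf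
  have hf_eq : ∀ n, f n = if N ≤ n then v^n / (Nat.factorial n : ℝ) else 0 := by
    intro n
    simp only [hf, Nat.ceil_le.symm, hNdef]
  set C : ℝ := v ^ N / (Nat.factorial N : ℝ) with hC
  have hCpos : 0 < C := by positivity
  set r : ℝ := v / ((N:ℝ) + 1) with hr
  have hr0 : 0 ≤ r := by positivity
  have hrb : r < 1 / b := by
    rw [hr, div_lt_div_iff₀ (by linarith) hb0]
    nlinarith
  have hr1 : r < 1 := lt_trans hrb (by rw [div_lt_one hb0]; exact hb)
  -- key termwise bound
  have key : ∀ j : ℕ, v ^ (N + j) / (Nat.factorial (N + j) : ℝ) ≤ C * r ^ j := by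
    intro j
    induction j with
    | zero => simp [hC]
    | succ k ih =>
      have hfac : (Nat.factorial (N + (k+1)) : ℝ) = (Nat.factorial (N + k) : ℝ) * ((N:ℝ) + k + 1) := by
        rw [show N + (k+1) = (N + k) + 1 by ring, Nat.factorial_succ]
        push_cast
        ring
      have hpos : (0:ℝ) < (Nat.factorial (N + k) : ℝ) := by positivity
      have step : v ^ (N + (k+1)) / (Nat.factorial (N + (k+1)) : ℝ)
          = (v ^ (N + k) / (Nat.factorial (N + k) : ℝ)) * (v / ((N:ℝ) + k + 1)) := by
        rw [hfac, show N + (k+1) = (N + k) + 1 from rfl, pow_succ]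
        field_simp
        try ring
      rw [step, pow_succ]
      have hvk : v / ((N:ℝ) + k + 1) ≤ r := by
        rw [hr]
        apply div_le_div_of_nonneg_left hv0.le (by linarith)
        push_cast
        have : (0:ℝ) ≤ (k:ℝ) := Nat.cast_nonneg k
        linarith
      have hterm : 0 ≤ v ^ (N + k) / (Nat.factorial (N + k) : ℝ) := by positivity
      calc (v ^ (N + k) / (Nat.factorial (N + k) : ℝ)) * (v / ((N:ℝ) + k + 1))
          ≤ (C * r ^ k) * r := by
            apply mul_le_mul ih hvk (by positivity) (by positivity)
        _ = C * (r ^ k * r) := by ring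
  -- summability
  have hsum_exp : Summable (fun n : ℕ => v ^ n / (Nat.factorial n : ℝ)) :=
    Real.summable_pow_div_factorial v
  have hsum_f : Summable f := by
    apply Summable.of_nonneg_of_le _ _ hsum_exp
    · intro n; rw [hf_eq]; split <;> positivity
    · intro n; rw [hf_eq]; split
      · exact le_refl _
      · positivity
  have hsum_shift : Summable (fun j : ℕ => v ^ (N + j) / (Nat.factorial (N + j) : ℝ)) := by
    have := (summable_nat_add_iff N).mpr hsum_exp
    exact this.congr (fun j => by rw [Nat.add_comm])
  have hsum_geo : Summable (fun j : ℕ => C * r ^ j) :=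
    (summable_geometric_of_lt_one hr0 hr1).mul_left C
  -- rewrite the tsum as shifted sum
  have htsum_shift : ∑' n, f n = ∑' j, v ^ (N + j) / (Nat.factorial (N + j) : ℝ) := by
    rw [← Summable.sum_add_tsum_nat_add N hsum_f]
    have h1 : ∑ i ∈ Finset.range N, f i = 0 := by
      apply Finset.sum_eq_zero
      intro i hi
      rw [hf_eq]
      simp [Nat.not_le.mpr (Finset.mem_range.mp hi)]
    rw [h1, zero_add]
    congr 1
    ext j
    rw [hf_eq]
    rw [if_pos (Nat.le_add_left N j), Nat.add_comm]
  -- the geometric bound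
  have hstep1 : ∑' n, f n ≤ C * (1 - r)⁻¹ := by
    rw [htsum_shift]
    calc ∑' j, v ^ (N + j) / (Nat.factorial (N + j) : ℝ)
        ≤ ∑' j, C * r ^ j := Summable.tsum_le_tsum key hsum_shift hsum_geo
      _ = C * (1 - r)⁻¹ := by
          rw [tsum_mul_left, tsum_geometric_of_lt_one hr0 hr1]
  have hstep2 : C * (1 - r)⁻¹ < C * (b / (b - 1)) := by
    apply mul_lt_mul_of_pos_left _ hCpos
    have h1 : b / (b - 1) = (1 - 1/b)⁻¹ := by
      rw [eq_comm, inv_eq_iff_eq_inv, eq_comm]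
      field_simp
    rw [h1]
    apply inv_strictAnti₀
    · rw [sub_pos, div_lt_one hb0]; exact hb
    · linarith
  -- Stirling bound on C
  set E : ℝ := Real.exp (v * (1 - (b * Real.log b - b + 1))) with hE
  have hCbound : C ≤ E / Real.sqrt (2 * Real.pi * (b * v)) := by
    have hfac := stirling_lower hN1
    have hpow : (0:ℝ) < ((N:ℝ) / Real.exp 1) ^ N := by positivity
    have hsq : (0:ℝ) < Real.sqrt (2 * Real.pi * (N:ℝ)) := by positivity
    have h1 : C ≤ v ^ N / (Real.sqrt (2 * Real.pi * (N:ℝ)) * ((N:ℝ) / Real.exp 1) ^ N) := by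
      apply div_le_div_of_nonneg_left (by positivity) (by positivity) hfac
    -- log computation
    have hexp : v ^ N / (((N:ℝ) / Real.exp 1) ^ N) ≤ E := by
      have hvN : v ^ N = Real.exp ((N:ℝ) * Real.log v) := by
        rw [Real.exp_nat_mul, Real.exp_log hv0]
      have hNN : (N:ℝ) ^ N = Real.exp ((N:ℝ) * Real.log (N:ℝ)) := by
        rw [Real.exp_nat_mul, Real.exp_log hNpos]
      have hEN : Real.exp 1 ^ N = Real.exp ((N:ℝ) * 1) := by
        rw [Real.exp_nat_mul]
      have hlhs : v ^ N / (((N:ℝ) / Real.exp 1) ^ N)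
          = Real.exp ((N:ℝ) * (Real.log v + 1 - Real.log (N:ℝ))) := by
        rw [div_pow, hvN, hNN, hEN, div_div_eq_mul_div, ← Real.exp_add, ← Real.exp_sub]
        congr 1
        ring
      rw [hlhs, hE, Real.exp_le_exp]
      -- antitone function argument
      have hder : ∀ x : ℝ, 0 < x → HasDerivAt (fun x : ℝ => x * (Real.log v + 1 - Real.log x))
          (Real.log v - Real.log x) x := by
        intro x hx
        have h1 : HasDerivAt (fun x : ℝ => x * (Real.log v + 1 - Real.log x)) (1 * (Real.log v + 1 - Real.log x) + x * (0 - x⁻¹)) x := (hasDerivAt_id x).mul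
          ((hasDerivAt_const x (Real.log v + 1)).sub (Real.hasDerivAt_log hx.ne'))
        convert h1 using 1
        field_simp
        ring
      have hφ : AntitoneOn (fun x : ℝ => x * (Real.log v + 1 - Real.log x)) (Set.Ici v) := by
        apply antitoneOn_of_deriv_nonpos (convex_Ici v)
        · intro x hx
          exact (hder x (lt_of_lt_of_le hv0 hx)).continuousAt.continuousWithinAt
        · rw [interior_Ici]
          intro x hx
          exact (hder x (lt_trans hv0 hx)).differentiableAt.differentiableWithinAt
        · rw [interior_Ici]
          intro x hx
          rw [(hder x (lt_trans hv0 hx)).deriv]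
          have := Real.log_le_log hv0 (le_of_lt hx)
          linarith
      have hvbv : v ≤ b * v := by nlinarith
      have h2 := hφ (Set.mem_Ici.mpr hvbv) (Set.mem_Ici.mpr (le_trans hvbv hN)) hN
      have h3 : b * v * (Real.log v + 1 - Real.log (b * v))
          = v * (1 - (b * Real.log b - b + 1)) := by
        rw [Real.log_mul hb0.ne' hv0.ne']
        ring
      calc (N:ℝ) * (Real.log v + 1 - Real.log (N:ℝ))
          ≤ b * v * (Real.log v + 1 - Real.log (b * v)) := h2
        _ = v * (1 - (b * Real.log b - b + 1)) := h3
    have hsqmono : Real.sqrt (2 * Real.pi * (b * v)) ≤ Real.sqrt (2 * Real.pi * (N:ℝ)) := by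
      apply Real.sqrt_le_sqrt
      nlinarith [Real.pi_pos]
    have hE0 : 0 ≤ E := Real.exp_nonneg _
    calc C ≤ v ^ N / (Real.sqrt (2 * Real.pi * (N:ℝ)) * ((N:ℝ) / Real.exp 1) ^ N) := h1
      _ = (v ^ N / (((N:ℝ) / Real.exp 1) ^ N)) / Real.sqrt (2 * Real.pi * (N:ℝ)) := by
          field_simp
      _ ≤ E / Real.sqrt (2 * Real.pi * (N:ℝ)) := by gcongr
      _ ≤ E / Real.sqrt (2 * Real.pi * (b * v)) := by
          apply div_le_div_of_nonneg_left hE0 (by positivity) hsqmono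
  -- combine everything
  have hbb1 : (0:ℝ) ≤ b / (b - 1) := by
    apply div_nonneg hb0.le; linarith
  have hfinal : (E / Real.sqrt (2 * Real.pi * (b * v))) * (b / (b - 1))
      = Real.sqrt b * E / ((b - 1) * Real.sqrt (2 * Real.pi * v)) := by
    have h1 : 2 * Real.pi * (b * v) = b * (2 * Real.pi * v) := by ring
    rw [h1, Real.sqrt_mul hb0.le]
    have hsv0 : (0:ℝ) < Real.sqrt (2 * Real.pi * v) := Real.sqrt_pos.mpr (by positivity)
    set s := Real.sqrt (2 * Real.pi * v) with hs
    set q := Real.sqrt b with hqdef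
    have hq : q * q = b := Real.mul_self_sqrt hb0.le
    have hq0 : q ≠ 0 := ne_of_gt (Real.sqrt_pos.mpr hb0)
    have hs0 : s ≠ 0 := ne_of_gt hsv0
    have hb1 : b - 1 ≠ 0 := by intro h; linarith
    field_simp
    linear_combination (-E) * hq
  calc ∑' n, f n ≤ C * (1 - r)⁻¹ := hstep1
    _ < C * (b / (b - 1)) := hstep2
    _ ≤ (E / Real.sqrt (2 * Real.pi * (b * v))) * (b / (b - 1)) :=
        mul_le_mul_of_nonneg_right hCbound hbb1
    _ = _ := hfinal
end

section
/- There exists an absolute constant C such that for every natural number n and real v ≥ 1 with ρ := n/v > 1, the partial sum P_n(v) := ∑_{0 ≤ j ≤ n} v^j/j! satisfies |P_n(v) - e^v| ≤ C·e^v·√ρ·e^{-v·Q(ρ)}/((ρ-1)·√v), where Q(t) := t·log t - t + 1. -/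
open Real Finset

/-- Stirling lower bound consequence: `√n * n^n ≤ e^n * n!`. -/
lemma fact_lb (n : ℕ) : Real.sqrt n * (n:ℝ)^n ≤ Real.exp n * (Nat.factorial n : ℝ) := by
  rcases n with _ | m
  · simp
  set n := m + 1 with hn
  have htend : Filter.Tendsto (Stirling.stirlingSeq ∘ Nat.succ) Filter.atTop (nhds (Real.sqrt π)) :=
    Stirling.tendsto_stirlingSeq_sqrt_pi.comp (Filter.tendsto_add_atTop_nat 1)
  have hlb : Real.sqrt π ≤ Stirling.stirlingSeq n :=
    Stirling.stirlingSeq'_antitone.le_of_tendsto htend m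
  have h1 : (1:ℝ) ≤ Stirling.stirlingSeq n := by
    refine le_trans ?_ hlb
    rw [show (1:ℝ) = Real.sqrt 1 by simp]
    exact Real.sqrt_le_sqrt (by linarith [Real.pi_gt_three])
  have hn0 : (0:ℝ) < (n:ℝ) := by positivity
  have hden : (0:ℝ) < Real.sqrt (2 * n) * ((n:ℝ) / Real.exp 1) ^ n := by positivity
  have h2 : Real.sqrt (2 * n) * ((n:ℝ) / Real.exp 1) ^ n ≤ (Nat.factorial n : ℝ) := by
    have := (one_le_div hden).mp (by simpa [Stirling.stirlingSeq] using h1)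
    linarith
  have h3 : Real.sqrt n ≤ Real.sqrt (2 * n) := Real.sqrt_le_sqrt (by linarith)
  calc Real.sqrt n * (n:ℝ)^n ≤ Real.sqrt (2*n) * (n:ℝ)^n :=
        mul_le_mul_of_nonneg_right h3 (by positivity)
    _ = (Real.sqrt (2*n) * ((n:ℝ)/Real.exp 1)^n) * Real.exp n := by
        rw [div_pow, Real.exp_one_pow]
        field_simp
    _ ≤ (Nat.factorial n : ℝ) * Real.exp n :=
        mul_le_mul_of_nonneg_right h2 (Real.exp_pos _).le
    _ = Real.exp n * (Nat.factorial n : ℝ) := mul_comm _ _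

set_option maxHeartbeats 1000000 in
theorem stmt_5 : ∃ C : ℝ, 0 < C ∧ ∀ (n : ℕ) (v : ℝ), 1 ≤ v → 1 < (n:ℝ)/v →
    |(∑ j ∈ Finset.range (n+1), v^j / (Nat.factorial j : ℝ)) - Real.exp v|
      ≤ C * Real.exp v * Real.sqrt ((n:ℝ)/v)
          * Real.exp (-v * ((n:ℝ)/v * Real.log ((n:ℝ)/v) - (n:ℝ)/v + 1))
          / (((n:ℝ)/v - 1) * Real.sqrt v) := by
  refine ⟨1, one_pos, fun n v hv hρ => ?_⟩
  have hv0 : (0:ℝ) < v := lt_of_lt_of_le one_pos hv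
  have hnv : v < (n:ℝ) := by
    have := (one_lt_div hv0).mp hρ
    linarith
  have hn0 : (0:ℝ) < (n:ℝ) := lt_trans hv0 hnv
  have hnvpos : (0:ℝ) < (n:ℝ) - v := by linarith
  -- series for exp
  have hs : HasSum (fun j : ℕ => v^j / (Nat.factorial j : ℝ)) (Real.exp v) := by
    rw [Real.exp_eq_exp_ℝ]
    exact NormedSpace.expSeries_div_hasSum_exp v
  have hsum : Summable (fun j : ℕ => v^j / (Nat.factorial j : ℝ)) :=
    Real.summable_pow_div_factorial v
  have htail : Real.exp v - (∑ j ∈ Finset.range (n+1), v^j / (Nat.factorial j : ℝ))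
      = ∑' k : ℕ, v^(k+(n+1)) / (Nat.factorial (k+(n+1)) : ℝ) := by
    have h := Summable.sum_add_tsum_nat_add (f := fun j : ℕ => v^j / (Nat.factorial j : ℝ)) (n+1) hsum
    rw [hs.tsum_eq] at h
    linarith
  -- geometric bound for the tail
  set r : ℝ := v / (n+1) with hrdef
  have hr0 : 0 ≤ r := by positivity
  have hr1 : r < 1 := by
    rw [hrdef, div_lt_one (by positivity)]
    linarith
  have hterm : ∀ k : ℕ, v^(k+(n+1)) / (Nat.factorial (k+(n+1)) : ℝ)
      ≤ (v^(n+1) / (Nat.factorial (n+1) : ℝ)) * r^k := by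
    intro k
    have hfac : ((Nat.factorial (n+1) : ℝ)) * ((n:ℝ)+1)^k ≤ (Nat.factorial (k+(n+1)) : ℝ) := by
      have h := Nat.factorial_mul_pow_le_factorial (m := n+1) (n := k)
      have h2 : (n+1).factorial * ((n:ℕ)+1)^k ≤ (n+1).factorial * ((n:ℕ)+2)^k :=
        Nat.mul_le_mul_left _ (Nat.pow_le_pow_left (by omega) k)
      have h3 := le_trans h2 h
      calc ((Nat.factorial (n+1) : ℝ)) * ((n:ℝ)+1)^k
          = ((((n+1).factorial * ((n:ℕ)+1)^k : ℕ)) : ℝ) := by push_cast; ring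
        _ ≤ (((n+1+k).factorial : ℕ) : ℝ) := by exact_mod_cast h3
        _ = (Nat.factorial (k+(n+1)) : ℝ) := by rw [add_comm]
    have hd1 : (0:ℝ) < (Nat.factorial (n+1) : ℝ) * ((n:ℝ)+1)^k := by positivity
    calc v^(k+(n+1)) / (Nat.factorial (k+(n+1)) : ℝ)
        ≤ v^(k+(n+1)) / ((Nat.factorial (n+1) : ℝ) * ((n:ℝ)+1)^k) :=
          div_le_div_of_nonneg_left (by positivity) hd1 hfac
      _ = (v^(n+1) / (Nat.factorial (n+1) : ℝ)) * r^k := by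
          rw [pow_add, hrdef, div_pow]
          field_simp
  have hgs : Summable (fun k : ℕ => (v^(n+1) / (Nat.factorial (n+1) : ℝ)) * r^k) :=
    (summable_geometric_of_lt_one hr0 hr1).mul_left _
  have htsum : Summable (fun k : ℕ => v^(k+(n+1)) / (Nat.factorial (k+(n+1)) : ℝ)) :=
    (summable_nat_add_iff (n+1)).2 hsum
  have hbound : Real.exp v - (∑ j ∈ Finset.range (n+1), v^j / (Nat.factorial j : ℝ))
      ≤ (v^(n+1) / (Nat.factorial (n+1) : ℝ)) * (1 - r)⁻¹ := by
    rw [htail]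
    calc (∑' k : ℕ, v^(k+(n+1)) / (Nat.factorial (k+(n+1)) : ℝ))
        ≤ ∑' k : ℕ, (v^(n+1) / (Nat.factorial (n+1) : ℝ)) * r^k :=
          Summable.tsum_le_tsum hterm htsum hgs
      _ = (v^(n+1) / (Nat.factorial (n+1) : ℝ)) * (1 - r)⁻¹ := by
          rw [tsum_mul_left, tsum_geometric_of_lt_one hr0 hr1]
  have htail_nonneg : 0 ≤ Real.exp v - (∑ j ∈ Finset.range (n+1), v^j / (Nat.factorial j : ℝ)) := by
    rw [htail]
    exact tsum_nonneg (fun k => by positivity)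
  rw [abs_sub_comm, abs_of_nonneg htail_nonneg]
  -- rewrite the RHS
  have hρpos : (0:ℝ) < (n:ℝ)/v := by positivity
  have hE : Real.exp v * Real.exp (-v * ((n:ℝ)/v * Real.log ((n:ℝ)/v) - (n:ℝ)/v + 1))
      = Real.exp n * (v/(n:ℝ))^n := by
    rw [← Real.exp_add]
    have h2 : v + -v * ((n:ℝ)/v * Real.log ((n:ℝ)/v) - (n:ℝ)/v + 1)
        = (n:ℝ) - (n:ℝ) * Real.log ((n:ℝ)/v) := by
      field_simp
      ring
    rw [h2, Real.exp_sub, Real.exp_nat_mul, Real.exp_log hρpos]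
    rw [div_eq_mul_inv (Real.exp (n:ℕ)), ← inv_pow, inv_div]
  have hsq : Real.sqrt v * Real.sqrt v = v := Real.mul_self_sqrt hv0.le
  have hsqv : (0:ℝ) < Real.sqrt v := Real.sqrt_pos.mpr hv0
  have hsqrtρ : Real.sqrt ((n:ℝ)/v) = Real.sqrt n / Real.sqrt v := Real.sqrt_div hn0.le v
  have hRHS : (1:ℝ) * Real.exp v * Real.sqrt ((n:ℝ)/v)
          * Real.exp (-v * ((n:ℝ)/v * Real.log ((n:ℝ)/v) - (n:ℝ)/v + 1))
          / (((n:ℝ)/v - 1) * Real.sqrt v)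
      = Real.exp n * (v/(n:ℝ))^n * Real.sqrt n / ((n:ℝ) - v) := by
    have h3 : (n:ℝ)/v - 1 = ((n:ℝ) - v)/v := by field_simp
    rw [hsqrtρ, h3,
      show (1:ℝ) * Real.exp v * (Real.sqrt n / Real.sqrt v)
          * Real.exp (-v * ((n:ℝ)/v * Real.log ((n:ℝ)/v) - (n:ℝ)/v + 1))
        = (Real.exp v * Real.exp (-v * ((n:ℝ)/v * Real.log ((n:ℝ)/v) - (n:ℝ)/v + 1)))
          * (Real.sqrt n / Real.sqrt v) from by ring, hE]
    have hden : ((n:ℝ) - v)/v * Real.sqrt v = ((n:ℝ) - v)/Real.sqrt v := by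
      field_simp
      rw [sq, hsq]
    rw [hden, div_div_eq_mul_div]
    congr 1
    field_simp
  rw [hRHS]
  -- step A : (1-r)⁻¹ ≤ n/(n-v)
  have hA : (1 - r)⁻¹ ≤ (n:ℝ) / ((n:ℝ) - v) := by
    have h1 : ((n:ℝ) - v)/(n:ℝ) ≤ 1 - r := by
      have hvv : v/((n:ℝ)+1) ≤ v/(n:ℝ) := by
        apply div_le_div_of_nonneg_left hv0.le hn0
        linarith
      have heq : ((n:ℝ) - v)/(n:ℝ) = 1 - v/(n:ℝ) := by field_simp
      rw [heq, hrdef]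
      linarith
    have h2 : (0:ℝ) < ((n:ℝ) - v)/(n:ℝ) := by positivity
    calc (1 - r)⁻¹ ≤ (((n:ℝ) - v)/(n:ℝ))⁻¹ := inv_anti₀ h2 h1
      _ = (n:ℝ)/((n:ℝ) - v) := by rw [inv_div]
  -- final comparison
  have hfac1 : (0:ℝ) < (Nat.factorial (n+1) : ℝ) := by positivity
  have hc0 : (0:ℝ) ≤ v^(n+1) / (Nat.factorial (n+1) : ℝ) := by positivity
  have key : v^(n+1) * (n:ℝ) * (n:ℝ)^n
      ≤ Real.exp n * (v^n * Real.sqrt n) * (Nat.factorial (n+1) : ℝ) := by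
    have hsn : Real.sqrt (n:ℝ) * Real.sqrt (n:ℝ) = (n:ℝ) := Real.mul_self_sqrt hn0.le
    have hfb := fact_lb n
    have hfs : (Nat.factorial (n+1) : ℝ) = ((n:ℝ)+1) * (Nat.factorial n : ℝ) := by
      rw [Nat.factorial_succ]; push_cast; ring
    calc v^(n+1) * (n:ℝ) * (n:ℝ)^n = (v^n * (n:ℝ) * (n:ℝ)^n) * v := by rw [pow_succ]; ring
      _ ≤ (v^n * (n:ℝ) * (n:ℝ)^n) * (n:ℝ) :=
          mul_le_mul_of_nonneg_left hnv.le (by positivity)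
      _ = (v^n * (n:ℝ) * Real.sqrt n) * (Real.sqrt n * (n:ℝ)^n) := by
          linear_combination (-(v^n * (n:ℝ) * (n:ℝ)^n)) * hsn
      _ ≤ (v^n * (n:ℝ) * Real.sqrt n) * (Real.exp n * (Nat.factorial n : ℝ)) :=
          mul_le_mul_of_nonneg_left hfb (by positivity)
      _ = (Real.exp n * (v^n * Real.sqrt n) * (Nat.factorial n : ℝ)) * (n:ℝ) := by ring
      _ ≤ (Real.exp n * (v^n * Real.sqrt n) * (Nat.factorial n : ℝ)) * ((n:ℝ)+1) :=
          mul_le_mul_of_nonneg_left (by linarith) (by positivity)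
      _ = Real.exp n * (v^n * Real.sqrt n) * (Nat.factorial (n+1) : ℝ) := by rw [hfs]; ring
  calc Real.exp v - (∑ j ∈ Finset.range (n+1), v^j / (Nat.factorial j : ℝ))
      ≤ (v^(n+1) / (Nat.factorial (n+1) : ℝ)) * (1 - r)⁻¹ := hbound
    _ ≤ (v^(n+1) / (Nat.factorial (n+1) : ℝ)) * ((n:ℝ) / ((n:ℝ) - v)) :=
        mul_le_mul_of_nonneg_left hA hc0
    _ ≤ Real.exp n * (v/(n:ℝ))^n * Real.sqrt n / ((n:ℝ) - v) := by
        have hnn : (0:ℝ) < (n:ℝ)^n := pow_pos hn0 n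
        rw [div_mul_div_comm, div_le_div_iff₀ (by positivity) hnvpos, div_pow,
          ← mul_le_mul_iff_of_pos_right hnn]
        calc v^(n+1) * (n:ℝ) * ((n:ℝ) - v) * (n:ℝ)^n
            = (v^(n+1) * (n:ℝ) * (n:ℝ)^n) * ((n:ℝ) - v) := by ring
          _ ≤ (Real.exp n * (v^n * Real.sqrt n) * (Nat.factorial (n+1) : ℝ)) * ((n:ℝ) - v) :=
              mul_le_mul_of_nonneg_right key hnvpos.le
          _ = Real.exp n * (v^n / (n:ℝ)^n) * Real.sqrt n * ((Nat.factorial (n+1) : ℝ) * ((n:ℝ) - v)) * (n:ℝ)^n := by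
              field_simp
end

section
/- Let Φ(v) := (1/√(2π))·∫_{-∞}^v e^{-t²/2} dt. There is an absolute constant C such that for all real a > 0, real b, and real K > 0 with |b| ≤ (1/2)·K·a^{-1/3}, the integral 𝒥_K(a,b) := ∫_{-K·a^{2/3}}^{K·a^{2/3}} Φ(t/√a)·e^{b·t - t²/(2a)} dt satisfies |𝒥_K(a,b) - √(2πa)·e^{a·b²/2}·Φ(b·√a/√2)| ≤ C·√(2πa)·e^{a·b²/2}·Φ(b·√a/√2)·e^{-K²·a^{1/3}/8}. -/
open MeasureTheory Real Set
open scoped Pointwise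

noncomputable def Phi (v : ℝ) : ℝ :=
  (Real.sqrt (2 * Real.pi))⁻¹ * ∫ t in Set.Iic v, Real.exp (-t^2/2)

lemma gauss_total : ∫ x : ℝ, Real.exp (-x^2/2) = Real.sqrt (2*Real.pi) := by
  have h : ∀ x : ℝ, -x^2/2 = -(1/2) * x^2 := by intro x; ring
  simp_rw [h, integral_gaussian]; norm_num; ring

lemma gauss_integrable : Integrable (fun x : ℝ => Real.exp (-x^2/2)) := by
  have h : ∀ x : ℝ, -x^2/2 = -(1/2) * x^2 := by intro x; ring
  simp_rw [h]; exact integrable_exp_neg_mul_sq (by norm_num)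

lemma sqrt2pi_pos : 0 < Real.sqrt (2*Real.pi) := Real.sqrt_pos.2 (by positivity)

lemma phi_mono : Monotone Phi := by
  intro v w hvw
  unfold Phi
  have h := setIntegral_mono_set (s := Iic v) (t := Iic w)
    gauss_integrable.integrableOn
    (Filter.Eventually.of_forall fun x => le_of_lt (Real.exp_pos _))
    (HasSubset.Subset.eventuallyLE (Iic_subset_Iic.2 hvw))
  exact mul_le_mul_of_nonneg_left h (by positivity)

lemma phi_nonneg (v : ℝ) : 0 ≤ Phi v := by
  unfold Phi
  have : 0 ≤ ∫ t in Iic v, Real.exp (-t^2/2) :=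
    setIntegral_nonneg measurableSet_Iic (fun x _ => le_of_lt (Real.exp_pos _))
  positivity

lemma phi_pos (v : ℝ) : 0 < Phi v := by
  unfold Phi
  have h : 0 < ∫ t in Iic v, Real.exp (-t^2/2) := by
    rw [setIntegral_pos_iff_support_of_nonneg_ae
      (Filter.Eventually.of_forall fun x => le_of_lt (Real.exp_pos _))
      gauss_integrable.integrableOn]
    have : Function.support (fun t : ℝ => Real.exp (-t^2/2)) = univ := by
      ext x; simp [Function.mem_support, (Real.exp_pos _).ne']
    rw [this]
    simp [Real.volume_Iic]
  positivity

lemma phi_le_one (v : ℝ) : Phi v ≤ 1 := by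
  unfold Phi
  rw [inv_mul_le_iff₀ sqrt2pi_pos, mul_one, ← gauss_total]
  exact setIntegral_le_integral gauss_integrable
    (Filter.Eventually.of_forall fun x => le_of_lt (Real.exp_pos _))

lemma phi_zero : Phi 0 = 1/2 := by
  unfold Phi
  have h1 : ∫ t in Iic (0:ℝ), Real.exp (-t^2/2) = ∫ t in Ioi (0:ℝ), Real.exp (-t^2/2) := by
    have e1 : ∫ t in Iic (0:ℝ), Real.exp (-t^2/2)
        = ∫ t in Iic (0:ℝ), Real.exp (-(-t)^2/2) := by
      apply setIntegral_congr_fun measurableSet_Iic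
      intro x _; ring_nf
    rw [e1, integral_comp_neg_Iic 0 (fun t => Real.exp (-t^2/2)), neg_zero]
  have h2 : (∫ t in Iic (0:ℝ), Real.exp (-t^2/2)) + ∫ t in Ioi (0:ℝ), Real.exp (-t^2/2)
      = Real.sqrt (2*Real.pi) := by
    rw [← gauss_total]
    rw [← setIntegral_union (Iic_disjoint_Ioi le_rfl) measurableSet_Ioi
      gauss_integrable.integrableOn gauss_integrable.integrableOn, Iic_union_Ioi,
      setIntegral_univ]
  rw [h1] at h2
  have : ∫ t in Iic (0:ℝ), Real.exp (-t^2/2) = Real.sqrt (2*Real.pi) / 2 := by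
    rw [h1]; linarith
  rw [this]
  field_simp

lemma Iic_shift (f : ℝ → ℝ) (c d : ℝ) :
    ∫ u in Iic c, f (u + d) = ∫ w in Iic (c + d), f w := by
  have h := (measurePreserving_add_right volume d).setIntegral_preimage_emb
    (measurableEmbedding_addRight d) f (Iic (c + d))
  have hpre : (· + d) ⁻¹' Iic (c + d) = Iic c := by ext x; simp [mem_Iic]
  rw [hpre] at h
  exact h

-- full-line gaussian with shift and positive coefficient
lemma gauss_shift (k d : ℝ) (hk : 0 < k) :
    ∫ z : ℝ, Real.exp (-(k*(z+d)^2)/2) = Real.sqrt (2*Real.pi/k) := by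
  have h1 : ∫ z : ℝ, Real.exp (-(k*(z+d)^2)/2) = ∫ z : ℝ, Real.exp (-(k*z^2)/2) := by
    exact integral_add_right_eq_self (fun z => Real.exp (-(k*z^2)/2)) d
  rw [h1]
  have h2 : ∀ z : ℝ, -(k*z^2)/2 = -(k/2) * z^2 := fun z => by ring
  simp_rw [h2, integral_gaussian]
  rw [div_div_eq_mul_div, mul_comm Real.pi 2]

lemma gauss_shift_integrable (k d : ℝ) (hk : 0 < k) :
    Integrable (fun z : ℝ => Real.exp (-(k*(z+d)^2)/2)) := by
  have h2 : ∀ z : ℝ, -(k*(z+d)^2)/2 = -(k/2) * (z+d)^2 := fun z => by ring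
  simp_rw [h2]
  exact (integrable_exp_neg_mul_sq (by positivity)).comp_add_right d

-- Iic scaling
lemma Iic_scale (f : ℝ → ℝ) (c r : ℝ) (hr : 0 < r) :
    ∫ u in Iic (r * c), f u = r * ∫ v in Iic c, f (r * v) := by
  have h := Measure.setIntegral_comp_smul_of_pos (volume : Measure ℝ) f (Iic c) hr
  have hs : r • Iic c = Iic (r * c) := by
    rw [LinearOrderedField.smul_Iic hr]
  rw [hs] at h
  simp only [Module.finrank_self, pow_one, smul_eq_mul] at h
  rw [h, ← mul_assoc, mul_inv_cancel₀ hr.ne', one_mul]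

lemma shifted_gauss_integrable (d : ℝ) : Integrable (fun u : ℝ => Real.exp (-(u+d)^2/2)) :=
  gauss_integrable.comp_add_right d

lemma shifted_gauss_total (d : ℝ) : ∫ u : ℝ, Real.exp (-(u+d)^2/2) = Real.sqrt (2*Real.pi) := by
  rw [integral_add_right_eq_self (fun w => Real.exp (-w^2/2)) d]; exact gauss_total

lemma lemA (c s : ℝ) :
    ∫ z : ℝ, Phi (c + s*z) * Real.exp (-z^2/2)
      = Real.sqrt (2*Real.pi) * Phi (c / Real.sqrt (1+s^2)) := by
  set k : ℝ := 1 + s^2 with hkdef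
  have hk0 : 0 < k := by positivity
  set r : ℝ := Real.sqrt k with hrdef
  have hr0 : 0 < r := Real.sqrt_pos.2 hk0
  have hr2 : r^2 = k := Real.sq_sqrt hk0.le
  set F : ℝ → ℝ → ℝ := fun z u => Real.exp (-(u + s*z)^2/2) * Real.exp (-z^2/2) with hFdef
  have step1 : ∀ z : ℝ, Phi (c + s*z) * Real.exp (-z^2/2)
      = (Real.sqrt (2*Real.pi))⁻¹ * ∫ u in Iic c, F z u := by
    intro z
    have h2 : ∫ u in Iic c, F z u
        = (∫ u in Iic c, Real.exp (-(u + s*z)^2/2)) * Real.exp (-z^2/2) := by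
      rw [← integral_mul_const]
    rw [h2, Iic_shift (fun w => Real.exp (-w^2/2)) c (s*z)]
    unfold Phi
    ring
  simp_rw [step1]
  rw [integral_const_mul]
  have hmeas : AEStronglyMeasurable (Function.uncurry F)
      ((volume : Measure ℝ).prod (volume.restrict (Iic c))) := by
    apply Continuous.aestronglyMeasurable
    unfold Function.uncurry
    fun_prop
  have hint : Integrable (Function.uncurry F)
      ((volume : Measure ℝ).prod (volume.restrict (Iic c))) := by
    rw [integrable_prod_iff hmeas]
    constructor
    · refine Filter.Eventually.of_forall fun z => ?_
      exact ((shifted_gauss_integrable (s*z)).mul_const (Real.exp (-z^2/2))).integrableOn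
    · apply Integrable.mono' (gauss_integrable.const_mul (Real.sqrt (2*Real.pi)))
      · exact hmeas.norm.integral_prod_right'
      · refine Filter.Eventually.of_forall fun z => ?_
        simp only [Function.uncurry]
        have hnn : 0 ≤ ∫ u in Iic c, ‖F z u‖ :=
          integral_nonneg fun u => norm_nonneg _
        rw [Real.norm_of_nonneg hnn]
        have he : ∀ u, ‖F z u‖ = F z u := fun u => by
          rw [Real.norm_of_nonneg (by positivity)]
        simp_rw [he]
        have h2 : ∫ u in Iic c, F z u
            = (∫ u in Iic c, Real.exp (-(u + s*z)^2/2)) * Real.exp (-z^2/2) := by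
          rw [← integral_mul_const]
        rw [h2]
        have h3 : (∫ u in Iic c, Real.exp (-(u + s*z)^2/2)) ≤ Real.sqrt (2*Real.pi) := by
          rw [← shifted_gauss_total (s*z)]
          exact setIntegral_le_integral (shifted_gauss_integrable (s*z))
            (Filter.Eventually.of_forall fun u => (Real.exp_pos _).le)
        exact mul_le_mul_of_nonneg_right h3 (Real.exp_pos _).le
  rw [integral_integral_swap hint]
  have inner : ∀ u : ℝ, (∫ z : ℝ, F z u)
      = Real.sqrt (2*Real.pi/k) * Real.exp (-u^2/(2*k)) := by
    intro u
    have hexp : ∀ z : ℝ, F z u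
        = Real.exp (-(k*(z + s*u/k)^2)/2) * Real.exp (-u^2/(2*k)) := by
      intro z
      rw [hFdef]
      simp only
      rw [← Real.exp_add, ← Real.exp_add]
      congr 1
      field_simp
      ring
    simp_rw [hexp]
    rw [integral_mul_const, gauss_shift k (s*u/k) hk0]
  simp_rw [inner]
  rw [integral_const_mul]
  have hscale : (∫ u in Iic c, Real.exp (-u^2/(2*k)))
      = r * (Real.sqrt (2*Real.pi) * Phi (c / r)) := by
    have hc : c = r * (c / r) := (mul_div_cancel₀ _ hr0.ne').symm
    rw [hc, Iic_scale (fun u => Real.exp (-u^2/(2*k))) (c/r) r hr0]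
    have : ∀ v : ℝ, Real.exp (-(r*v)^2/(2*k)) = Real.exp (-v^2/2) := by
      intro v
      congr 1
      rw [mul_pow, hr2]
      field_simp
    simp_rw [this]
    have hPhi : ∫ v in Iic (c/r), Real.exp (-v^2/2)
        = Real.sqrt (2*Real.pi) * Phi (c/r) := by
      unfold Phi
      rw [← mul_assoc, mul_inv_cancel₀ sqrt2pi_pos.ne', one_mul]
    rw [mul_div_cancel_left₀ _ hr0.ne', hPhi]
  rw [hscale]
  have hsq : Real.sqrt (2*Real.pi/k) * r = Real.sqrt (2*Real.pi) := by
    rw [hrdef, ← Real.sqrt_mul (by positivity), div_mul_cancel₀ _ hk0.ne']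
  have : c / r = c / Real.sqrt (1+s^2) := by rw [hrdef, hkdef]
  rw [← this]
  field_simp
  rw [hsq]

lemma lemB (a m b : ℝ) (ha : 0 < a) (hm : 0 < m) :
    ∫ t : ℝ, Phi (t / Real.sqrt a) * Real.exp (b*t - t^2/(2*m))
      = Real.sqrt m * Real.sqrt (2*Real.pi) * Real.exp (m*b^2/2)
        * Phi (b * m / Real.sqrt (a + m)) := by
  set rm : ℝ := Real.sqrt m with hrm
  have hrm0 : 0 < rm := Real.sqrt_pos.2 hm
  have hrm2 : rm^2 = m := Real.sq_sqrt hm.le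
  set ra : ℝ := Real.sqrt a with hra
  have hra0 : 0 < ra := Real.sqrt_pos.2 ha
  have hra2 : ra^2 = a := Real.sq_sqrt ha.le
  set g : ℝ → ℝ := fun t => Phi (t / ra) * Real.exp (b*t - t^2/(2*m)) with hg
  -- scale t = rm * x
  have h1 : ∫ x : ℝ, g (rm * x) = |rm⁻¹| • ∫ t : ℝ, g t :=
    Measure.integral_comp_mul_left g rm
  have h1' : ∫ t : ℝ, g t = rm * ∫ x : ℝ, g (rm * x) := by
    rw [h1, abs_of_pos (by positivity), smul_eq_mul, ← mul_assoc,
      mul_inv_cancel₀ hrm0.ne', one_mul]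
  -- shift x = z + b*rm
  have h2 : ∫ x : ℝ, g (rm * x) = ∫ z : ℝ, g (rm * (z + b * rm)) :=
    (integral_add_right_eq_self (fun x => g (rm * x)) (b * rm)).symm
  have h3 : ∀ z : ℝ, g (rm * (z + b * rm))
      = Real.exp (m*b^2/2) * (Phi (b * m / ra + (rm / ra) * z) * Real.exp (-z^2/2)) := by
    intro z
    rw [hg]
    simp only
    have e1 : rm * (z + b * rm) / ra = b * m / ra + (rm / ra) * z := by
      rw [← hrm2]
      field_simp
      try ring
    have e2 : b * (rm * (z + b * rm)) - (rm * (z + b * rm))^2/(2*m)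
        = m*b^2/2 + (-z^2/2) := by
      rw [← hrm2]
      field_simp
      try ring
    rw [e1, e2, Real.exp_add]
    ring
  rw [h1', h2]
  simp_rw [h3]
  rw [integral_const_mul, lemA (b * m / ra) (rm / ra)]
  have e3 : Real.sqrt (1 + (rm/ra)^2) = Real.sqrt (a + m) / ra := by
    rw [eq_div_iff hra0.ne', ← Real.sqrt_sq hra0.le, ← Real.sqrt_mul (by positivity)]
    rw [← hrm2, ← hra2]
    simp only [Real.sqrt_sq hra0.le]
    field_simp
    try ring
  have e4 : b * m / ra / Real.sqrt (1 + (rm/ra)^2) = b * m / Real.sqrt (a + m) := by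
    rw [e3]
    field_simp
  rw [e4]
  ring

lemma integrable_aux (m b : ℝ) (hm : 0 < m) :
    Integrable (fun t : ℝ => Real.exp (b*t - t^2/(2*m))) := by
  have h : ∀ t : ℝ, b*t - t^2/(2*m) = m*b^2/2 + (-(1/(2*m)) * (t + -(m*b))^2) := by
    intro t; field_simp; ring
  simp_rw [h, Real.exp_add]
  exact ((integrable_exp_neg_mul_sq (by positivity)).comp_add_right (-(m*b))).const_mul _

lemma integrable_g (a m b : ℝ) (ha : 0 < a) (hm : 0 < m) :
    Integrable (fun t : ℝ => Phi (t / Real.sqrt a) * Real.exp (b*t - t^2/(2*m))) := by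
  apply Integrable.mono' (integrable_aux m b hm)
  · apply AEStronglyMeasurable.mul
    · exact (phi_mono.measurable.comp (measurable_id.div_const _)).aestronglyMeasurable
    · exact (Real.continuous_exp.comp (by continuity)).aestronglyMeasurable
  · refine Filter.Eventually.of_forall fun t => ?_
    rw [Real.norm_of_nonneg (mul_nonneg (phi_nonneg _) (Real.exp_pos _).le)]
    nlinarith [phi_le_one (t / Real.sqrt a), phi_nonneg (t / Real.sqrt a),
      (Real.exp_pos (b*t - t^2/(2*m))).le]

lemma sqrt3_le : Real.sqrt 3 ≤ 2 * Real.sqrt 2 := by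
  have h8 : (8:ℝ) = 4 * 2 := by norm_num
  have : Real.sqrt 8 = 2 * Real.sqrt 2 := by
    rw [h8, Real.sqrt_mul (by norm_num), show Real.sqrt 4 = 2 by
      rw [show (4:ℝ) = 2^2 by norm_num, Real.sqrt_sq (by norm_num)]]
  rw [← this]
  exact Real.sqrt_le_sqrt (by norm_num)

lemma sqrt2_le : Real.sqrt 2 ≤ 3/2 := by
  rw [show (3:ℝ)/2 = Real.sqrt ((3/2)^2) by rw [Real.sqrt_sq (by norm_num)]]
  exact Real.sqrt_le_sqrt (by norm_num)

lemma phi_compare (a b : ℝ) (ha : 0 < a) :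
    Phi (b * (2*a) / Real.sqrt (a + 2*a)) ≤ 2 * Phi (b * Real.sqrt a / Real.sqrt 2) := by
  rcases le_or_gt b 0 with hb | hb
  · have hsa : Real.sqrt a * Real.sqrt a = a := Real.mul_self_sqrt ha.le
    have h1 : Real.sqrt (a + 2*a) = Real.sqrt 3 * Real.sqrt a := by
      rw [← Real.sqrt_mul (by norm_num : (0:ℝ) ≤ 3)]
      congr 1; ring
    have harg : b * (2*a) / Real.sqrt (a + 2*a) ≤ b * Real.sqrt a / Real.sqrt 2 := by
      rw [h1, div_le_div_iff₀ (by positivity) (by positivity)]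
      have key : 0 ≤ (-b) * a * (2 * Real.sqrt 2 - Real.sqrt 3) :=
        mul_nonneg (mul_nonneg (neg_nonneg.2 hb) ha.le) (by linarith [sqrt3_le])
      have expand : b * Real.sqrt a * (Real.sqrt 3 * Real.sqrt a)
          = b * Real.sqrt 3 * (Real.sqrt a * Real.sqrt a) := by ring
      rw [expand, hsa]
      nlinarith [key]
    have := phi_mono harg
    linarith [phi_nonneg (b * Real.sqrt a / Real.sqrt 2)]
  · have h0 : (0:ℝ) ≤ b * Real.sqrt a / Real.sqrt 2 := by positivity
    have := phi_mono h0
    rw [phi_zero] at this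
    linarith [phi_le_one (b * (2*a) / Real.sqrt (a + 2*a))]

theorem stmt_8 : ∃ C : ℝ, 0 < C ∧ ∀ (a b K : ℝ), 0 < a → 0 < K →
    |b| ≤ (1/2) * K * a ^ (-(1:ℝ)/3) →
    |(∫ t in (-(K * a ^ ((2:ℝ)/3)))..(K * a ^ ((2:ℝ)/3)),
          Phi (t / Real.sqrt a) * Real.exp (b * t - t^2 / (2*a)))
        - Real.sqrt (2 * Real.pi * a) * Real.exp (a * b^2 / 2)
            * Phi (b * Real.sqrt a / Real.sqrt 2)|
      ≤ C * Real.sqrt (2 * Real.pi * a) * Real.exp (a * b^2 / 2)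
          * Phi (b * Real.sqrt a / Real.sqrt 2)
          * Real.exp (-K^2 * a ^ ((1:ℝ)/3) / 8) := by
  refine ⟨3, by norm_num, fun a b K ha hK hb => ?_⟩
  set T : ℝ := K * a ^ ((2:ℝ)/3) with hTdef
  have hT0 : 0 < T := by positivity
  set q : ℝ := K^2 * a ^ ((1:ℝ)/3) with hqdef
  have hq0 : 0 < q := by positivity
  set g : ℝ → ℝ := fun t => Phi (t / Real.sqrt a) * Real.exp (b*t - t^2/(2*a)) with hgdef
  set h : ℝ → ℝ := fun t => Phi (t / Real.sqrt a) * Real.exp (b*t - t^2/(2*(2*a))) with hhdef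
  have hg_int : Integrable g := integrable_g a a b ha ha
  have hh_int : Integrable h := integrable_g a (2*a) b ha (by linarith)
  have hg_nn : ∀ t, 0 ≤ g t := fun t => mul_nonneg (phi_nonneg _) (Real.exp_pos _).le
  have hh_nn : ∀ t, 0 ≤ h t := fun t => mul_nonneg (phi_nonneg _) (Real.exp_pos _).le
  -- the full-line integral equals M
  have hsa : Real.sqrt a * Real.sqrt a = a := Real.mul_self_sqrt ha.le
  have hM : ∫ t : ℝ, g t = Real.sqrt (2 * Real.pi * a) * Real.exp (a * b^2 / 2)
      * Phi (b * Real.sqrt a / Real.sqrt 2) := by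
    rw [hgdef, lemB a a b ha ha]
    have e1 : Real.sqrt (2 * Real.pi * a) = Real.sqrt (2 * Real.pi) * Real.sqrt a := by
      rw [← Real.sqrt_mul (by positivity)]
    have e2 : b * a / Real.sqrt (a + a) = b * Real.sqrt a / Real.sqrt 2 := by
      rw [show a + a = 2 * a by ring, Real.sqrt_mul (by norm_num : (0:ℝ) ≤ 2)]
      rw [div_eq_div_iff (by positivity) (by positivity)]
      calc b * a * Real.sqrt 2 = b * (Real.sqrt a * Real.sqrt a) * Real.sqrt 2 := by rw [hsa]
        _ = b * Real.sqrt a * (Real.sqrt 2 * Real.sqrt a) := by ring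
    rw [e1, e2]; ring
  -- J as set integral
  have hJ : (∫ t in (-T)..T, g t) = ∫ t in Ioc (-T) T, g t :=
    intervalIntegral.integral_of_le (by linarith)
  have hsplit := integral_add_compl (measurableSet_Ioc : MeasurableSet (Ioc (-T) T)) hg_int
  -- tail bound
  have htail1 : ∫ t in (Ioc (-T) T)ᶜ, g t
      ≤ Real.exp (-(q/4)) * ∫ t in (Ioc (-T) T)ᶜ, h t := by
    rw [← integral_const_mul]
    apply setIntegral_mono_on hg_int.integrableOn ((hh_int.const_mul _).integrableOn)
      measurableSet_Ioc.compl
    intro t ht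
    have hT2 : T^2 ≤ t^2 := by
      simp only [mem_compl_iff, mem_Ioc, not_and_or, not_lt, not_le] at ht
      rcases ht with h1 | h1 <;> nlinarith
    have hq4 : T^2/(4*a) = q/4 := by
      rw [hqdef, hTdef, mul_pow, ← Real.rpow_natCast (a ^ ((2:ℝ)/3)) 2,
        ← Real.rpow_mul ha.le]
      norm_num
      rw [show (4:ℝ)/3 = (1:ℝ)/3 + 1 by norm_num, Real.rpow_add ha, Real.rpow_one]
      field_simp
    have hgh : g t = h t * Real.exp (-(t^2/(4*a))) := by
      rw [hgdef, hhdef]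
      simp only
      rw [mul_assoc, ← Real.exp_add]
      congr 2
      field_simp
      ring
    rw [hgh]
    calc h t * Real.exp (-(t^2/(4*a))) ≤ h t * Real.exp (-(T^2/(4*a))) := by
          apply mul_le_mul_of_nonneg_left _ (hh_nn t)
          apply Real.exp_le_exp.2
          gcongr
      _ = Real.exp (-(q/4)) * h t := by rw [hq4]; ring
  have htail2 : ∫ t in (Ioc (-T) T)ᶜ, h t ≤ ∫ t : ℝ, h t :=
    setIntegral_le_integral hh_int (Filter.Eventually.of_forall hh_nn)
  have hI2 : ∫ t : ℝ, h t = Real.sqrt (2*a) * Real.sqrt (2*Real.pi) * Real.exp (2*a*b^2/2)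
      * Phi (b * (2*a) / Real.sqrt (a + 2*a)) := by
    rw [hhdef, lemB a (2*a) b ha (by linarith)]
  have hab2 : a * b^2 ≤ q/4 := by
    have h1 : b^2 ≤ ((1/2) * K * a ^ (-(1:ℝ)/3))^2 := by
      rw [← sq_abs]
      exact pow_le_pow_left₀ (abs_nonneg b) hb 2
    have h2 : ((1/2) * K * a ^ (-(1:ℝ)/3))^2 = K^2/4 * (a ^ (-(1:ℝ)/3))^2 := by ring
    have h3 : a * (a ^ (-(1:ℝ)/3))^2 = a ^ ((1:ℝ)/3) := by
      rw [← Real.rpow_natCast (a ^ (-(1:ℝ)/3)) 2, ← Real.rpow_mul ha.le]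
      nth_rewrite 1 [← Real.rpow_one a]
      rw [← Real.rpow_add ha]
      norm_num
    calc a * b^2 ≤ a * (K^2/4 * (a ^ (-(1:ℝ)/3))^2) := by
          rw [← h2]; exact mul_le_mul_of_nonneg_left h1 ha.le
      _ = K^2/4 * (a * (a ^ (-(1:ℝ)/3))^2) := by ring
      _ = q/4 := by rw [h3, hqdef]; ring
  have hsqa : Real.sqrt (2*a) * Real.sqrt (2*Real.pi)
      = Real.sqrt 2 * Real.sqrt (2*Real.pi*a) := by
    rw [show Real.sqrt (2*Real.pi*a) = Real.sqrt (2*Real.pi) * Real.sqrt a from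
      Real.sqrt_mul (by positivity) a, Real.sqrt_mul (by norm_num : (0:ℝ) ≤ 2) a]
    ring
  set P : ℝ := Phi (b * Real.sqrt a / Real.sqrt 2) with hP
  have hkey : Real.exp (-(q/4)) * ∫ t : ℝ, h t
      ≤ 3 * Real.sqrt (2*Real.pi*a) * Real.exp (a*b^2/2) * P
        * Real.exp (-K^2 * a ^ ((1:ℝ)/3) / 8) := by
    rw [hI2]
    have hPc := phi_compare a b ha
    have hE : Real.exp (-(q/4)) * Real.exp (2*a*b^2/2)
        ≤ Real.exp (a*b^2/2) * Real.exp (-(q/8)) := by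
      rw [← Real.exp_add, ← Real.exp_add]
      apply Real.exp_le_exp.2
      linarith [hab2]
    have hfin : -K^2 * a ^ ((1:ℝ)/3) / 8 = -(q/8) := by rw [hqdef]; ring
    rw [hfin]
    calc Real.exp (-(q/4)) * (Real.sqrt (2*a) * Real.sqrt (2*Real.pi)
            * Real.exp (2*a*b^2/2) * Phi (b*(2*a)/Real.sqrt (a+2*a)))
        = (Real.sqrt 2 * Real.sqrt (2*Real.pi*a))
            * ((Real.exp (-(q/4)) * Real.exp (2*a*b^2/2))
              * Phi (b*(2*a)/Real.sqrt (a+2*a))) := by rw [hsqa]; ring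
      _ ≤ (Real.sqrt 2 * Real.sqrt (2*Real.pi*a))
            * ((Real.exp (a*b^2/2) * Real.exp (-(q/8))) * (2 * P)) := by
          apply mul_le_mul_of_nonneg_left _ (by positivity)
          apply mul_le_mul hE hPc (phi_nonneg _) (by positivity)
      _ = (2 * Real.sqrt 2)
            * (Real.sqrt (2*Real.pi*a) * Real.exp (a*b^2/2) * Real.exp (-(q/8)) * P) := by
          ring
      _ ≤ 3 * (Real.sqrt (2*Real.pi*a) * Real.exp (a*b^2/2) * Real.exp (-(q/8)) * P) := by
          apply mul_le_mul_of_nonneg_right (by nlinarith [sqrt2_le])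
          have hp0 := phi_nonneg (b * Real.sqrt a / Real.sqrt 2)
          rw [hP]
          positivity
      _ = 3 * Real.sqrt (2*Real.pi*a) * Real.exp (a*b^2/2) * P * Real.exp (-(q/8)) := by
          ring
  have hJle : (∫ t in Ioc (-T) T, g t) ≤ ∫ t : ℝ, g t :=
    setIntegral_le_integral hg_int (Filter.Eventually.of_forall hg_nn)
  rw [hJ, show Real.sqrt (2 * Real.pi * a) * Real.exp (a * b ^ 2 / 2) * P
      = ∫ t : ℝ, g t from by rw [hM, hP]]
  rw [abs_sub_comm, abs_of_nonneg (sub_nonneg.2 hJle)]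
  have hdiff : (∫ t : ℝ, g t) - (∫ t in Ioc (-T) T, g t) = ∫ t in (Ioc (-T) T)ᶜ, g t := by
    linarith [hsplit]
  rw [hdiff]
  calc (∫ t in (Ioc (-T) T)ᶜ, g t) ≤ Real.exp (-(q/4)) * ∫ t in (Ioc (-T) T)ᶜ, h t := htail1
    _ ≤ Real.exp (-(q/4)) * ∫ t : ℝ, h t :=
        mul_le_mul_of_nonneg_left htail2 (Real.exp_pos _).le
    _ ≤ 3 * Real.sqrt (2*Real.pi*a) * Real.exp (a*b^2/2) * P
        * Real.exp (-K^2 * a ^ ((1:ℝ)/3) / 8) := hkey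
end

section
/- There is an absolute constant C such that for all x ≥ 2 and all integers k ≥ 1, the number of integers n ≤ x with Ω(n) ≥ k is at most C·k·x·(log x)/2^k, where Ω(n) denotes the number of prime factors of n counted with multiplicity. -/
open Finset ArithmeticFunction
open scoped ArithmeticFunction.Omega ArithmeticFunction.omega

lemma odd_of_dvd {c d : ℕ} (h : c ∣ d) (hd : Odd d) : Odd c := by
  rcases Nat.even_or_odd c with hc | hc
  · exfalso
    rw [← Nat.not_even_iff_odd] at hd
    exact hd ((even_iff_two_dvd).mpr (dvd_trans ((even_iff_two_dvd).mp hc) h))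
  · exact hc

lemma l1 {e : ℕ} (he : Squarefree e) : (2:ℕ) ^ (Ω e) ≤ e.divisors.card := by
  have h0 : e ≠ 0 := he.ne_zero
  rw [Nat.card_divisors h0]
  have hΩ : Ω e = ω e := ((cardDistinctFactors_eq_cardFactors_iff_squarefree h0).mpr he).symm
  have hω : ω e = e.primeFactors.card := by
    rw [cardDistinctFactors_apply, Nat.primeFactors, List.card_toFinset]
  rw [hΩ, hω]
  rw [← Finset.prod_const]
  apply Finset.prod_le_prod
  · intros; positivity
  · intro p hp
    have := (Nat.Prime.dvd_iff_one_le_factorization (Nat.prime_of_mem_primeFactors hp) h0).2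
    have h1 : 1 ≤ e.factorization p := (Nat.mem_primeFactors.1 hp).2.1 |>.elim (fun h _ => by
      exact (Nat.Prime.factorization_pos_of_dvd (Nat.prime_of_mem_primeFactors hp) h0 ((Nat.mem_primeFactors.1 hp)).2.1))
    omega

lemma l2 (M : ℕ) : ∑ n ∈ Icc 1 M, n.divisors.card ≤ ∑ c ∈ Icc 1 M, M / c := by
  classical
  rw [← Finset.card_sigma]
  have h2 : ∑ c ∈ Icc 1 M, M / c = ((Icc 1 M).sigma (fun c => Icc 1 (M / c))).card := by
    rw [Finset.card_sigma]
    exact Finset.sum_congr rfl (fun c _ => by rw [Nat.card_Icc]; simp)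
  rw [h2]
  apply Finset.card_le_card_of_injOn (fun x => ⟨x.2, x.1 / x.2⟩)
  · rintro ⟨n, c⟩ (hx : (⟨n, c⟩ : Σ _ : ℕ, ℕ) ∈ (Icc 1 M).sigma Nat.divisors)
    simp only [Finset.mem_coe, Finset.mem_sigma, Finset.mem_Icc, Nat.mem_divisors] at hx ⊢
    obtain ⟨⟨h1n, hnM⟩, hcn, hn0⟩ := hx
    have hc0 : 0 < c := Nat.pos_of_dvd_of_pos hcn (by omega)
    refine ⟨⟨hc0, le_trans (Nat.le_of_dvd (by omega) hcn) hnM⟩, ?_, Nat.div_le_div_right hnM⟩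
    exact Nat.one_le_div_iff hc0 |>.2 (Nat.le_of_dvd (by omega) hcn)
  · rintro ⟨n₁, c₁⟩ h₁ ⟨n₂, c₂⟩ h₂ heq
    simp only [Finset.coe_sigma, Set.mem_sigma_iff, Finset.mem_coe, Nat.mem_divisors] at h₁ h₂
    simp only [Sigma.mk.inj_iff] at heq
    obtain ⟨rfl, he⟩ := heq
    have e1 : c₁ * (n₁ / c₁) = n₁ := Nat.mul_div_cancel' h₁.2.1
    have e2 : c₁ * (n₂ / c₁) = n₂ := Nat.mul_div_cancel' h₂.2.1
    have : n₁ = n₂ := by rw [← e1, ← e2, (by simpa using he : n₁/c₁ = n₂/c₁)]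
    simp [this]

lemma l3 (M : ℕ) : ∑ c ∈ Icc 1 M, ((M / c : ℕ) : ℝ) ≤ M * (1 + Real.log M) := by
  have h1 : ∑ c ∈ Icc 1 M, ((M / c : ℕ) : ℝ) ≤ ∑ c ∈ Icc 1 M, (M : ℝ) / c :=
    Finset.sum_le_sum fun c _ => Nat.cast_div_le
  refine h1.trans ?_
  have h2 : ∑ c ∈ Icc 1 M, (M : ℝ) / c = M * ∑ c ∈ Icc 1 M, ((c : ℝ))⁻¹ := by
    rw [Finset.mul_sum]; exact Finset.sum_congr rfl fun c _ => by rw [div_eq_mul_inv]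
  rw [h2]
  have h3 : ∑ c ∈ Icc 1 M, ((c : ℝ))⁻¹ = ((harmonic M : ℚ) : ℝ) := by
    rw [harmonic_eq_sum_Icc]; push_cast; rfl
  rw [h3]
  exact mul_le_mul_of_nonneg_left (harmonic_le_one_add_log M) (Nat.cast_nonneg M)

lemma tausum (M : ℕ) : ∑ e ∈ Icc 1 M, ((e.divisors.card : ℕ) : ℝ) ≤ M * (1 + Real.log M) := by
  calc ∑ e ∈ Icc 1 M, ((e.divisors.card : ℕ) : ℝ)
      = ((∑ e ∈ Icc 1 M, e.divisors.card : ℕ) : ℝ) := by rw [Nat.cast_sum]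
    _ ≤ ((∑ c ∈ Icc 1 M, M / c : ℕ) : ℝ) := by exact_mod_cast l2 M
    _ = ∑ c ∈ Icc 1 M, ((M / c : ℕ) : ℝ) := by rw [Nat.cast_sum]
    _ ≤ _ := l3 M

lemma tele (a : ℕ) (ha : 1 ≤ a) : ∀ K, ∑ j ∈ Icc (a+1) K, (((j:ℝ))^2)⁻¹ ≤ (a:ℝ)⁻¹ - ((max a K : ℕ):ℝ)⁻¹ := by
  intro K
  induction K with
  | zero => simp [Nat.Icc_eq_range', max_eq_left (Nat.zero_le a)]
  | succ K ih =>
    rcases le_or_gt (a+1) (K+1) with h | h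
    · have hK : a ≤ K := by omega
      rw [Finset.sum_Icc_succ_top h, max_eq_right (by omega : a ≤ K+1)]
      have hmax : max a K = K := max_eq_right hK
      rw [hmax] at ih
      have hK0 : (0:ℝ) < K := by
        have : 1 ≤ K := le_trans ha hK
        exact_mod_cast Nat.lt_of_lt_of_le Nat.zero_lt_one this
      have key : (((K+1:ℕ):ℝ)^2)⁻¹ ≤ (K:ℝ)⁻¹ - ((K+1:ℕ):ℝ)⁻¹ := by
        push_cast
        rw [inv_sub_inv (ne_of_gt hK0) (by positivity), inv_le_iff_one_le_mul₀ (by positivity)]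
        rw [div_mul_eq_mul_div, le_div_iff₀ (by positivity)]
        ring_nf
        nlinarith [hK0]
      calc _ ≤ ((a:ℝ)⁻¹ - (K:ℝ)⁻¹) + (((K+1:ℕ):ℝ)^2)⁻¹ := by
              exact add_le_add_left ih _
        _ ≤ _ := by
              have := key; push_cast at this ⊢; linarith
    · rw [Finset.Icc_eq_empty (by omega)]
      rw [max_eq_left (by omega : K+1 ≤ a)]
      simp

lemma lq (K : ℕ) : ∑ p ∈ (Icc 1 K).filter (fun p => p.Prime ∧ Odd p), (((p:ℝ))^2)⁻¹ ≤ 0.236 := by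
  classical
  set S := (Icc 1 K).filter (fun p => p.Prime ∧ Odd p) with hS
  rw [← Finset.sum_filter_add_sum_filter_not S (fun p => p < 25)]
  have h1 : ∑ p ∈ S.filter (fun p => p < 25), (((p:ℝ))^2)⁻¹
      ≤ ∑ p ∈ ({3,5,7,11,13,17,19,23} : Finset ℕ), (((p:ℝ))^2)⁻¹ := by
    apply Finset.sum_le_sum_of_subset_of_nonneg
    · intro p hp
      simp only [hS, Finset.mem_filter, Finset.mem_Icc] at hp
      obtain ⟨⟨⟨h1p, _⟩, hprime, hodd⟩, hlt⟩ := hp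
      interval_cases p <;> revert hprime hodd <;> decide
    · intros; positivity
  have h2 : ∑ p ∈ S.filter (fun p => ¬ p < 25), (((p:ℝ))^2)⁻¹
      ≤ ∑ j ∈ Icc 25 K, (((j:ℝ))^2)⁻¹ := by
    apply Finset.sum_le_sum_of_subset_of_nonneg
    · intro p hp
      simp only [hS, Finset.mem_filter, Finset.mem_Icc] at hp
      simp only [Finset.mem_Icc]
      omega
    · intros; positivity
  have h3 := tele 24 (by norm_num) K
  have h4 : ((24:ℕ):ℝ)⁻¹ - ((max 24 K : ℕ):ℝ)⁻¹ ≤ (24:ℝ)⁻¹ := by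
    have h0 : (0:ℝ) ≤ ((max 24 K : ℕ):ℝ)⁻¹ := by positivity
    have : ((24:ℕ):ℝ) = (24:ℝ) := by norm_num
    rw [this]
    linarith
  have h5 : (25:ℕ) = 24 + 1 := rfl
  rw [h5] at h2
  have := h2.trans (h3.trans h4)
  have h6 : ∑ p ∈ ({3,5,7,11,13,17,19,23} : Finset ℕ), (((p:ℝ))^2)⁻¹ ≤ 0.1942 := by
    norm_num
  linarith

lemma fiber (K : ℕ) : ∀ m, ∑ d ∈ (Icc 1 K).filter (fun d => Odd d ∧ Ω d = m), (((d:ℝ))^2)⁻¹ ≤ (0.236:ℝ)^m := by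
  intro m
  induction m with
  | zero =>
    have hsub : (Icc 1 K).filter (fun d => Odd d ∧ Ω d = 0) ⊆ {1} := by
      intro d hd
      simp only [Finset.mem_filter, Finset.mem_Icc] at hd
      obtain ⟨⟨h1, _⟩, _, hΩ⟩ := hd
      have : d = 1 := by
        by_contra hne
        have h2 : 2 ≤ d := by omega
        have := Nat.minFac_prime hne
        have hdvd : d.minFac ∣ d := Nat.minFac_dvd d
        have : 1 ≤ Ω d := by
          rw [cardFactors_apply]
          have := (Nat.mem_primeFactorsList (by omega)).2 ⟨this, hdvd⟩
          exact List.length_pos_iff.mpr (List.ne_nil_of_mem this)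
        omega
      simp [this]
    calc _ ≤ ∑ d ∈ ({1} : Finset ℕ), (((d:ℝ))^2)⁻¹ :=
          Finset.sum_le_sum_of_subset_of_nonneg hsub (by intros; positivity)
      _ = 1 := by norm_num
      _ ≤ _ := by norm_num
  | succ m ih =>
    classical
    set D := (Icc 1 K).filter (fun d => Odd d ∧ Ω d = m + 1) with hD
    set P := (Icc 1 K).filter (fun p => p.Prime ∧ Odd p) with hP
    set Dm := (Icc 1 K).filter (fun d => Odd d ∧ Ω d = m) with hDm
    set φ : ℕ → ℕ × ℕ := fun d => (d.minFac, d / d.minFac) with hφ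
    have hmem : ∀ d ∈ D, φ d ∈ P ×ˢ Dm ∧ d.minFac * (d / d.minFac) = d := by
      intro d hd
      simp only [hD, Finset.mem_filter, Finset.mem_Icc] at hd
      obtain ⟨⟨h1, hK⟩, hodd, hΩ⟩ := hd
      have hne : d ≠ 1 := by
        intro h; rw [h] at hΩ; simp at hΩ
      have hp : d.minFac.Prime := Nat.minFac_prime hne
      have hdvd : d.minFac ∣ d := Nat.minFac_dvd d
      have heq : d.minFac * (d / d.minFac) = d := Nat.mul_div_cancel' hdvd
      have hd0 : d ≠ 0 := by omega
      have hq0 : d / d.minFac ≠ 0 := by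
        intro h; rw [h, mul_zero] at heq; omega
      have hΩq : Ω (d / d.minFac) = m := by
        have := cardFactors_mul (Nat.Prime.ne_zero hp) hq0
        rw [heq] at this
        rw [cardFactors_apply_prime hp] at this
        omega
      refine ⟨?_, heq⟩
      simp only [Finset.mem_product, hP, hDm, Finset.mem_filter, Finset.mem_Icc]
      constructor
      · exact ⟨⟨hp.one_lt.le.trans' (by omega), le_trans (Nat.minFac_le (by omega)) hK⟩,
          hp, odd_of_dvd hdvd hodd⟩
      · refine ⟨⟨Nat.one_le_iff_ne_zero.2 hq0, le_trans (Nat.div_le_self _ _) hK⟩,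
          odd_of_dvd (Dvd.intro_left _ heq) hodd, hΩq⟩
    have hinj : Set.InjOn φ D := by
      intro d₁ h₁ d₂ h₂ he
      have e₁ := (hmem d₁ h₁).2
      have e₂ := (hmem d₂ h₂).2
      simp only [hφ, Prod.mk.injEq] at he
      obtain ⟨hA, hB⟩ := he
      rw [← e₁, ← e₂, hB, hA]
    calc ∑ d ∈ D, (((d:ℝ))^2)⁻¹
        = ∑ y ∈ D.image φ, (((y.1:ℝ))^2)⁻¹ * (((y.2:ℝ))^2)⁻¹ := by
          rw [Finset.sum_image (fun a ha b hb h => hinj ha hb h)]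
          refine Finset.sum_congr rfl fun d hd => ?_
          have heq := (hmem d hd).2
          rw [hφ]
          simp only
          rw [← mul_inv, ← mul_pow]
          norm_num
          rw [show ((d.minFac :ℝ) * (d / d.minFac : ℕ)) = ((d.minFac * (d / d.minFac) : ℕ) : ℝ) by push_cast; ring, heq]
      _ ≤ ∑ y ∈ P ×ˢ Dm, (((y.1:ℝ))^2)⁻¹ * (((y.2:ℝ))^2)⁻¹ := by
          apply Finset.sum_le_sum_of_subset_of_nonneg
          · intro y hy
            obtain ⟨d, hd, rfl⟩ := Finset.mem_image.1 hy
            exact (hmem d hd).1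
          · intros; positivity
      _ = (∑ p ∈ P, (((p:ℝ))^2)⁻¹) * (∑ d ∈ Dm, (((d:ℝ))^2)⁻¹) := by
          rw [Finset.sum_product]
          exact (Finset.sum_mul_sum P Dm (fun p => (((p:ℝ))^2)⁻¹) (fun d => (((d:ℝ))^2)⁻¹)).symm
      _ ≤ (0.236:ℝ) * (0.236:ℝ)^m := by
          apply mul_le_mul (lq K) ih (Finset.sum_nonneg fun _ _ => by positivity) (by norm_num)
      _ = (0.236:ℝ)^(m+1) := by ring

lemma list_len_le_prod : ∀ l : List ℕ, (∀ p ∈ l, 2 ≤ p) → l.length ≤ l.prod := by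
  intro l
  induction l with
  | nil => simp
  | cons a t ih =>
    intro h
    have h2 : 2 ≤ a := h a (List.mem_cons_self)
    have ht := ih (fun p hp => h p (List.mem_cons_of_mem a hp))
    have hp1 : 1 ≤ t.prod := Nat.one_le_iff_ne_zero.2 (by
      intro h0
      have := List.prod_eq_zero_iff.1 h0
      have := h 0 (List.mem_cons_of_mem a this)
      omega)
    simp only [List.length_cons, List.prod_cons]
    calc t.length + 1 ≤ t.prod + 1 := by omega
      _ ≤ 2 * t.prod := by omega
      _ ≤ a * t.prod := Nat.mul_le_mul_right _ h2

lemma cardFactors_le_self {d : ℕ} : Ω d ≤ d := by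
  rcases Nat.eq_zero_or_pos d with rfl | hd
  · simp
  rw [cardFactors_apply]
  calc d.primeFactorsList.length ≤ d.primeFactorsList.prod :=
        list_len_le_prod _ (fun p hp => (Nat.prime_of_mem_primeFactorsList hp).two_le)
    _ = d := Nat.prod_primeFactorsList (by omega)

lemma Abound (K : ℕ) :
    ∑ d ∈ (Icc 1 K).filter (fun d => Odd d), (4:ℝ)^(Ω d) * (((d:ℝ))^2)⁻¹ ≤ 18 := by
  classical
  rw [← Finset.sum_fiberwise_of_maps_to (g := fun d => Ω d) (t := range (K+1))
    (fun d hd => by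
      simp only [Finset.mem_filter, Finset.mem_Icc] at hd
      simp only [Finset.mem_range]
      have := @cardFactors_le_self d
      omega)]
  have step : ∀ m ∈ range (K+1),
      ∑ d ∈ ((Icc 1 K).filter (fun d => Odd d)).filter (fun d => Ω d = m),
        (4:ℝ)^(Ω d) * (((d:ℝ))^2)⁻¹ ≤ (0.944:ℝ)^m := by
    intro m _
    rw [Finset.filter_filter]
    have : ∀ d ∈ (Icc 1 K).filter (fun d => Odd d ∧ Ω d = m),
        (4:ℝ)^(Ω d) * (((d:ℝ))^2)⁻¹ = (4:ℝ)^m * (((d:ℝ))^2)⁻¹ := by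
      intro d hd
      simp only [Finset.mem_filter] at hd
      rw [hd.2.2]
    rw [Finset.sum_congr rfl this, ← Finset.mul_sum]
    calc (4:ℝ)^m * ∑ d ∈ (Icc 1 K).filter (fun d => Odd d ∧ Ω d = m), (((d:ℝ))^2)⁻¹
        ≤ (4:ℝ)^m * (0.236:ℝ)^m := by
          exact mul_le_mul_of_nonneg_left (fiber K m) (by positivity)
      _ = (0.944:ℝ)^m := by rw [← mul_pow]; norm_num
  calc _ ≤ ∑ m ∈ range (K+1), (0.944:ℝ)^m := Finset.sum_le_sum step
    _ = ((0.944:ℝ)^(K+1) - 1)/(0.944 - 1) := geom_sum_eq (by norm_num) _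
    _ ≤ 18 := by
      rw [div_le_iff_of_neg (by norm_num)]
      have : (0:ℝ) ≤ (0.944:ℝ)^(K+1) := by positivity
      nlinarith

lemma Sbound (N : ℕ) :
    ∑ b ∈ (Icc 1 N).filter (fun b => Odd b), (2:ℝ)^(Ω b) ≤ 18 * N * (1 + Real.log N) := by
  classical
  have H : ∀ n : ℕ, ∃ p : ℕ × ℕ, p.1 ^ 2 * p.2 = n ∧ Squarefree p.2 := fun n => by
    obtain ⟨a, c, h1, h2⟩ := Nat.sq_mul_squarefree n
    exact ⟨(c, a), h1, h2⟩
  choose f hprod hsf using H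
  set B := (Icc 1 N).filter (fun b => Odd b) with hB
  set T : Finset (Σ _ : ℕ, ℕ) :=
    ((Icc 1 N.sqrt).filter (fun d => Odd d)).sigma (fun d => Icc 1 (N / d^2)) with hT
  set φ : ℕ → (Σ _ : ℕ, ℕ) := fun b => ⟨(f b).1, (f b).2⟩ with hφ
  set g : (Σ _ : ℕ, ℕ) → ℝ := fun y => (4:ℝ)^(Ω y.1) * ((y.2.divisors.card : ℕ) : ℝ) with hg
  have hfacts : ∀ b ∈ B, Ω b = 2 * Ω (f b).1 + Ω (f b).2 ∧ φ b ∈ T := by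
    intro b hb
    simp only [hB, Finset.mem_filter, Finset.mem_Icc] at hb
    obtain ⟨⟨hb1, hbN⟩, hodd⟩ := hb
    have hp := hprod b
    have hd1 : (f b).1 ≥ 1 := by
      rcases Nat.eq_zero_or_pos (f b).1 with h | h
      · rw [h] at hp; simp at hp; omega
      · exact h
    have he1 : (f b).2 ≥ 1 := by
      rcases Nat.eq_zero_or_pos (f b).2 with h | h
      · rw [h] at hp; simp at hp; omega
      · exact h
    have hΩ : Ω b = 2 * Ω (f b).1 + Ω (f b).2 := by
      have h := cardFactors_mul (m := (f b).1^2) (n := (f b).2) (by positivity) (by omega)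
      rw [hp] at h
      rw [h, sq, cardFactors_mul (by omega) (by omega)]
      ring
    refine ⟨hΩ, ?_⟩
    simp only [hT, hφ, Finset.mem_sigma, Finset.mem_filter, Finset.mem_Icc]
    have hdvd2 : (f b).1 ^ 2 ∣ b := ⟨(f b).2, hp.symm⟩
    have hsq : (f b).1 ^ 2 ≤ N := le_trans (Nat.le_of_dvd (by omega) hdvd2) hbN
    refine ⟨⟨⟨hd1, ?_⟩, ?_⟩, he1, ?_⟩
    · rw [Nat.le_sqrt]; nlinarith
    · exact odd_of_dvd (dvd_trans (dvd_pow_self _ two_ne_zero) hdvd2) hodd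
    · rw [Nat.le_div_iff_mul_le (by positivity)]
      calc (f b).2 * (f b).1 ^ 2 = b := by rw [mul_comm]; exact hp
        _ ≤ N := hbN
  have hpt : ∀ b ∈ B, (2:ℝ)^(Ω b) ≤ g (φ b) := by
    intro b hb
    have hΩ := (hfacts b hb).1
    rw [hΩ, hg, hφ]
    simp only
    rw [pow_add, pow_mul]
    have h4 : ((2:ℝ)^2) = 4 := by norm_num
    rw [h4]
    apply mul_le_mul_of_nonneg_left _ (by positivity)
    calc (2:ℝ)^(Ω (f b).2) = (((2:ℕ)^(Ω (f b).2) : ℕ) : ℝ) := by push_cast; ring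
      _ ≤ _ := by exact_mod_cast l1 (hsf b)
  have hinj : Set.InjOn φ B := by
    intro b₁ h₁ b₂ h₂ he
    simp only [hφ, Sigma.mk.inj_iff, heq_eq_eq] at he
    rw [← hprod b₁, ← hprod b₂, he.1, he.2]
  calc ∑ b ∈ B, (2:ℝ)^(Ω b) ≤ ∑ b ∈ B, g (φ b) := Finset.sum_le_sum hpt
    _ = ∑ y ∈ B.image φ, g y := (Finset.sum_image (fun a ha b hb h => hinj ha hb h)).symm
    _ ≤ ∑ y ∈ T, g y := by
        apply Finset.sum_le_sum_of_subset_of_nonneg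
        · intro y hy
          obtain ⟨b, hb, rfl⟩ := Finset.mem_image.1 hy
          exact (hfacts b hb).2
        · intros; positivity
    _ = ∑ d ∈ (Icc 1 N.sqrt).filter (fun d => Odd d), ∑ e ∈ Icc 1 (N / d^2),
          (4:ℝ)^(Ω d) * ((e.divisors.card : ℕ) : ℝ) := by
        rw [hT, Finset.sum_sigma]
    _ ≤ ∑ d ∈ (Icc 1 N.sqrt).filter (fun d => Odd d),
          (4:ℝ)^(Ω d) * (((N:ℝ) / ((d:ℝ))^2) * (1 + Real.log N)) := by
        apply Finset.sum_le_sum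
        intro d hd
        simp only [Finset.mem_filter, Finset.mem_Icc] at hd
        rw [← Finset.mul_sum]
        apply mul_le_mul_of_nonneg_left _ (by positivity)
        set M := N / d^2 with hM
        calc ∑ e ∈ Icc 1 M, ((e.divisors.card : ℕ) : ℝ) ≤ M * (1 + Real.log M) := tausum M
          _ ≤ ((N:ℝ) / ((d:ℝ))^2) * (1 + Real.log N) := by
            apply mul_le_mul
            · calc ((M:ℕ):ℝ) ≤ (N:ℝ)/((d^2:ℕ):ℝ) := Nat.cast_div_le
                _ = (N:ℝ)/((d:ℝ))^2 := by push_cast; ring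
            · have h1 : (M:ℕ) ≤ N := Nat.div_le_self _ _
              have : Real.log M ≤ Real.log N := by
                rcases Nat.eq_zero_or_pos M with h | h
                · rw [h]; simp
                  exact Real.log_natCast_nonneg N
                · apply Real.log_le_log (by exact_mod_cast h) (by exact_mod_cast h1)
              linarith
            · have : (0:ℝ) ≤ Real.log M := Real.log_natCast_nonneg M
              linarith
            · positivity
    _ = (∑ d ∈ (Icc 1 N.sqrt).filter (fun d => Odd d), (4:ℝ)^(Ω d) * (((d:ℝ))^2)⁻¹)
          * ((N:ℝ) * (1 + Real.log N)) := by
        rw [Finset.sum_mul]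
        apply Finset.sum_congr rfl
        intro d _
        field_simp
    _ ≤ 18 * ((N:ℝ) * (1 + Real.log N)) := by
        apply mul_le_mul_of_nonneg_right (Abound _)
        have : (0:ℝ) ≤ Real.log N := Real.log_natCast_nonneg N
        positivity
    _ = 18 * N * (1 + Real.log N) := by ring

lemma Ubound (N j : ℕ) :
    ((((Icc 1 N).filter (fun b => Odd b ∧ j ≤ Ω b)).card : ℝ))
      ≤ ((2:ℝ)^j)⁻¹ * (18 * N * (1 + Real.log N)) := by
  classical
  have h1 : ((((Icc 1 N).filter (fun b => Odd b ∧ j ≤ Ω b)).card : ℝ))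
      ≤ ∑ b ∈ (Icc 1 N).filter (fun b => Odd b ∧ j ≤ Ω b), ((2:ℝ)^j)⁻¹ * (2:ℝ)^(Ω b) := by
    rw [Finset.card_eq_sum_ones, Nat.cast_sum]
    apply Finset.sum_le_sum
    intro b hb
    simp only [Finset.mem_filter] at hb
    have : (2:ℝ)^j ≤ (2:ℝ)^(Ω b) := by
      apply pow_le_pow_right₀ (by norm_num) hb.2.2
    rw [inv_mul_eq_div, le_div_iff₀ (by positivity)]
    simpa using this
  refine h1.trans ?_
  rw [← Finset.mul_sum]
  apply mul_le_mul_of_nonneg_left _ (by positivity)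
  refine le_trans ?_ (Sbound N)
  apply Finset.sum_le_sum_of_subset_of_nonneg
  · intro b hb
    simp only [Finset.mem_filter] at hb ⊢
    exact ⟨hb.1, hb.2.1⟩
  · intros; positivity

theorem stmt_13 : ∃ C : ℝ, 0 < C ∧ ∀ (x : ℝ), 2 ≤ x → ∀ k : ℕ, 1 ≤ k →
    (((Finset.Icc 1 (Nat.floor x)).filter
        (fun n => k ≤ ArithmeticFunction.cardFactors n)).card : ℝ)
      ≤ C * k * x * Real.log x / 2^k := by
  classical
  refine ⟨100, by norm_num, ?_⟩
  intro x hx k hk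
  set X := Nat.floor x with hX
  have hx0 : (0:ℝ) ≤ x := by linarith
  have hXx : (X:ℝ) ≤ x := Nat.floor_le hx0
  have hL2 : (0.6931:ℝ) ≤ Real.log x := by
    calc (0.6931:ℝ) ≤ Real.log 2 := by
          have := Real.log_two_gt_d9; linarith
      _ ≤ Real.log x := Real.log_le_log (by norm_num) hx
  set F := (Icc 1 X).filter (fun n => k ≤ Ω n) with hF
  set F₁ := F.filter (fun n => 2^k ∣ n) with hF₁
  set F₂ := F.filter (fun n => ¬ 2^k ∣ n) with hF₂
  have hsplit : F.card ≤ F₁.card + F₂.card := by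
    rw [hF₁, hF₂, Finset.card_filter_add_card_filter_not]
  -- F₁ bound
  have hF1 : (F₁.card : ℝ) ≤ x / 2^k := by
    have hsub : F₁ ⊆ (Ioc 0 X).filter (fun n => 2^k ∣ n) := by
      intro n hn
      simp only [hF₁, hF, Finset.mem_filter, Finset.mem_Icc, Finset.mem_Ioc] at hn ⊢
      exact ⟨⟨by omega, hn.1.1.2⟩, hn.2⟩
    have := Finset.card_le_card hsub
    rw [Nat.Ioc_filter_dvd_card_eq_div] at this
    calc (F₁.card : ℝ) ≤ ((X / 2^k : ℕ) : ℝ) := by exact_mod_cast this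
      _ ≤ (X:ℝ)/((2^k : ℕ):ℝ) := Nat.cast_div_le
      _ ≤ x / 2^k := by push_cast; gcongr
  -- F₂ bound
  set T : Finset (Σ _ : ℕ, ℕ) := (range k).sigma
    (fun a => (Icc 1 (X / 2^a)).filter (fun b => Odd b ∧ (k - a) ≤ Ω b)) with hT
  set φ : ℕ → (Σ _ : ℕ, ℕ) := fun n => ⟨n.factorization 2, ordCompl[2] n⟩ with hφ
  have hmem : ∀ n ∈ F₂, φ n ∈ T ∧ 2^(n.factorization 2) * (ordCompl[2] n) = n := by
    intro n hn
    simp only [hF₂, hF, Finset.mem_filter, Finset.mem_Icc] at hn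
    obtain ⟨⟨⟨h1n, hnX⟩, hΩn⟩, hndvd⟩ := hn
    have hn0 : n ≠ 0 := by omega
    have heq : 2^(n.factorization 2) * (ordCompl[2] n) = n :=
      Nat.ordProj_mul_ordCompl_eq_self n 2
    have hvk : n.factorization 2 < k := by
      by_contra h
      push_neg at h
      exact hndvd (dvd_trans (pow_dvd_pow 2 h) (Nat.ordProj_dvd n 2))
    have hbodd : Odd (ordCompl[2] n) := by
      rw [Nat.odd_iff]
      have := Nat.not_dvd_ordCompl Nat.prime_two hn0
      omega
    have hb0 : 0 < ordCompl[2] n := Nat.ordCompl_pos 2 hn0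
    have hΩb : Ω n = n.factorization 2 + Ω (ordCompl[2] n) := by
      have h := cardFactors_mul (m := 2^(n.factorization 2)) (n := ordCompl[2] n)
        (by positivity) (by omega)
      rw [heq, cardFactors_apply_prime_pow Nat.prime_two] at h
      exact h
    refine ⟨?_, heq⟩
    simp only [hT, hφ, Finset.mem_sigma, Finset.mem_range, Finset.mem_filter, Finset.mem_Icc]
    refine ⟨hvk, ⟨hb0, ?_⟩, hbodd, by omega⟩
    rw [Nat.le_div_iff_mul_le (by positivity)]
    calc (ordCompl[2] n) * 2^(n.factorization 2) = n := by rw [mul_comm]; exact heq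
      _ ≤ X := hnX
  have hinj : Set.InjOn φ F₂ := by
    intro n₁ h₁ n₂ h₂ he
    have e₁ := (hmem n₁ h₁).2
    have e₂ := (hmem n₂ h₂).2
    simp only [hφ, Sigma.mk.inj_iff, heq_eq_eq] at he
    obtain ⟨hA, hB⟩ := he
    rw [← e₁, ← e₂, hB, hA]
  have hcard2 : F₂.card ≤ T.card := by
    rw [← Finset.card_image_of_injOn hinj]
    apply Finset.card_le_card
    intro y hy
    obtain ⟨n, hn, rfl⟩ := Finset.mem_image.1 hy
    exact (hmem n hn).1
  have hTcard : (T.card : ℝ) ≤ (k:ℝ) * (18 * x * (1 + Real.log x) / 2^k) := by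
    rw [hT, Finset.card_sigma, Nat.cast_sum]
    have hterm : ∀ a ∈ range k,
        ((((Icc 1 (X / 2^a)).filter (fun b => Odd b ∧ (k - a) ≤ Ω b)).card : ℝ))
          ≤ 18 * x * (1 + Real.log x) / 2^k := by
      intro a ha
      simp only [Finset.mem_range] at ha
      refine (Ubound (X / 2^a) (k - a)).trans ?_
      set M := X / 2^a with hM
      have hMle : (M:ℝ) ≤ x / 2^a := by
        calc (M:ℝ) ≤ (X:ℝ)/((2^a:ℕ):ℝ) := Nat.cast_div_le
          _ ≤ x / 2^a := by push_cast; gcongr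
      have hlogM : Real.log M ≤ Real.log x := by
        rcases Nat.eq_zero_or_pos M with h | h
        · rw [h]; simp; linarith
        · apply Real.log_le_log (by exact_mod_cast h)
          calc (M:ℝ) ≤ (X:ℝ) := by exact_mod_cast Nat.div_le_self _ _
            _ ≤ x := hXx
      have h1M : (0:ℝ) ≤ 1 + Real.log M := by
        rcases Nat.eq_zero_or_pos M with h | h
        · rw [h]; simp
        · have : (0:ℝ) ≤ Real.log M := Real.log_natCast_nonneg M
          linarith
      have hstep : (18:ℝ) * M * (1 + Real.log M) ≤ 18 * (x/2^a) * (1 + Real.log x) := by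
        apply mul_le_mul
        · apply mul_le_mul_of_nonneg_left hMle (by norm_num)
        · linarith
        · exact h1M
        · positivity
      calc ((2:ℝ)^(k-a))⁻¹ * (18 * M * (1 + Real.log M))
          ≤ ((2:ℝ)^(k-a))⁻¹ * (18 * (x/2^a) * (1 + Real.log x)) := by
            apply mul_le_mul_of_nonneg_left hstep (by positivity)
        _ = 18 * x * (1 + Real.log x) / (2^(k-a) * 2^a) := by
            field_simp
        _ = 18 * x * (1 + Real.log x) / 2^k := by
            rw [← pow_add]
            congr 2
            omega
    calc ∑ a ∈ range k, ((((Icc 1 (X / 2^a)).filter (fun b => Odd b ∧ (k - a) ≤ Ω b)).card : ℝ))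
        ≤ ∑ a ∈ range k, (18 * x * (1 + Real.log x) / 2^k) := Finset.sum_le_sum hterm
      _ = (k:ℝ) * (18 * x * (1 + Real.log x) / 2^k) := by
          rw [Finset.sum_const, Finset.card_range, nsmul_eq_mul]
  -- assemble
  have hkr : (1:ℝ) ≤ (k:ℝ) := by exact_mod_cast hk
  have htot : (F.card : ℝ) ≤ x / 2^k + (k:ℝ) * (18 * x * (1 + Real.log x) / 2^k) := by
    calc (F.card : ℝ) ≤ (F₁.card : ℝ) + (F₂.card : ℝ) := by exact_mod_cast hsplit
      _ ≤ x / 2^k + (k:ℝ) * (18 * x * (1 + Real.log x) / 2^k) := by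
          apply add_le_add hF1
          exact le_trans (by exact_mod_cast hcard2) hTcard
  refine htot.trans ?_
  have key : x + (k:ℝ)*(18*x*(1+Real.log x)) ≤ 100*(k:ℝ)*x*Real.log x := by
    nlinarith [mul_nonneg (mul_nonneg (by linarith : (0:ℝ) ≤ (k:ℝ)) (by linarith : (0:ℝ) ≤ x))
        (by linarith : (0:ℝ) ≤ Real.log x - 0.6931),
      mul_nonneg (by linarith : (0:ℝ) ≤ (k:ℝ)-1) (by linarith : (0:ℝ) ≤ x)]
  calc x / 2^k + (k:ℝ) * (18*x*(1+Real.log x)/2^k)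
      = (x + (k:ℝ)*(18*x*(1+Real.log x)))/2^k := by ring
    _ ≤ 100*(k:ℝ)*x*Real.log x / 2^k := by gcongr
    _ = 100 * (k:ℝ) * x * Real.log x / 2^k := rfl
end

section
/- Let P_k(Y) := ∑_{0 ≤ j ≤ k} Y^j/j! and R := P_{k-1}(Y)/P_k(Y) for an integer k ≥ 1 and real Y > 0. Then for 0 < R < 1, the contour integral (1/(2πi))·∮_{|s|=R} (s-R)·e^{sY}/((1-s)·s^{k+1}) ds equals P_{k-1}(Y) - R·P_k(Y) = 0. -/
open Complex Metric Finset FormalMultilinearSeries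

theorem stmt_16 (k : ℕ) (hk : 1 ≤ k) (Y : ℝ) (hY : 0 < Y)
    (P : ℕ → ℝ) (hP : ∀ m, P m = ∑ j ∈ Finset.range (m+1), Y^j / (Nat.factorial j : ℝ))
    (R : ℝ) (hR : R = P (k-1) / P k) (hR0 : 0 < R) (hR1 : R < 1) :
    (1 / (2 * Real.pi * Complex.I)) *
        (∮ s in C(0, R), (s - (R:ℂ)) * Complex.exp (s * (Y:ℂ)) / ((1 - s) * s^(k+1)))
      = (P (k-1) : ℂ) - (R:ℂ) * (P k : ℂ) ∧ P (k-1) - R * P k = 0 := by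
  obtain ⟨m, rfl⟩ : ∃ m, k = m + 1 := ⟨k - 1, (Nat.succ_pred_eq_of_pos hk).symm⟩
  simp only [Nat.add_sub_cancel] at *
  have hPpos : ∀ n, 0 < P n := by
    intro n
    rw [hP]
    apply Finset.sum_pos
    · intro j _; positivity
    · exact Finset.nonempty_range_add_one
  have hkey : P m - R * P (m+1) = 0 := by
    rw [hR, div_mul_cancel₀ _ (hPpos (m+1)).ne']; ring
  refine ⟨?_, hkey⟩
  have hRHS : (P m : ℂ) - (R:ℂ) * (P (m+1) : ℂ) = 0 := by
    rw [show ((P m : ℝ):ℂ) - (R:ℂ)*((P (m+1):ℝ):ℂ) = ((P m - R * P (m+1) : ℝ) : ℂ) by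
      push_cast; ring, hkey, Complex.ofReal_zero]
  rw [hRHS]
  -- complex partial sums
  set PC : ℕ → ℂ := fun n => ∑ j ∈ Finset.range (n+1), (Y:ℂ)^j / (Nat.factorial j : ℂ) with hPC
  have hPCcast : ∀ n, PC n = ((P n : ℝ) : ℂ) := by
    intro n; rw [hP]; push_cast [hPC]; rfl
  -- the coefficient sequence
  set b : ℕ → ℂ := fun n => match n with | 0 => 0 | j+1 => PC j with hb
  set a : ℕ → ℂ := fun n => b n - (R:ℂ) * PC n with ha
  set f : ℂ → ℂ := fun s => (s - (R:ℂ)) * Complex.exp (s * (Y:ℂ)) / (1 - s) with hf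
  -- bound on PC
  have hPle : ∀ n, P n ≤ Real.exp Y := by
    intro n; rw [hP]
    exact Real.sum_le_exp_of_nonneg hY.le (n+1)
  have hPCnorm : ∀ n, ‖PC n‖ ≤ Real.exp Y := by
    intro n
    rw [hPCcast n, Complex.norm_real, Real.norm_eq_abs, abs_of_pos (hPpos n)]
    exact hPle n
  have hbnorm : ∀ n, ‖b n‖ ≤ Real.exp Y := by
    intro n
    match n with
    | 0 => simp [hb]; positivity
    | j+1 => exact hPCnorm j
  have hanorm : ∀ n, ‖a n‖ ≤ (1 + R) * Real.exp Y := by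
    intro n
    calc ‖a n‖ ≤ ‖b n‖ + ‖(R:ℂ) * PC n‖ := norm_sub_le _ _
      _ ≤ Real.exp Y + R * Real.exp Y := by
          refine add_le_add (hbnorm n) ?_
          rw [norm_mul, Complex.norm_real, Real.norm_eq_abs, abs_of_pos hR0]
          exact mul_le_mul_of_nonneg_left (hPCnorm n) hR0.le
      _ = (1 + R) * Real.exp Y := by ring
  -- f is differentiable on the closed ball
  have hne : ∀ s : ℂ, ‖s‖ < 1 → (1 : ℂ) - s ≠ 0 := by
    intro s hs h
    rw [sub_eq_zero] at h
    rw [← h] at hs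
    simp at hs
  have hd : DifferentiableOn ℂ f (closedBall (0:ℂ) R) := by
    intro s hs
    have hs1 : ‖s‖ < 1 := by
      have := mem_closedBall_iff_norm.mp hs
      simp only [sub_zero] at this
      linarith
    apply DifferentiableAt.differentiableWithinAt
    apply DifferentiableAt.div
    · exact (differentiableAt_id.sub (differentiableAt_const _)).mul
        ((differentiableAt_id.mul_const _).cexp)
    · exact (differentiableAt_const _).sub differentiableAt_id
    · exact hne s hs1
  -- the explicit power series sums to f on the ball
  have hsum : ∀ y : ℂ, ‖y‖ < R → HasSum (fun n => a n * y ^ n) (f y) := by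
    intro y hy
    have hy1 : ‖y‖ < 1 := hy.trans hR1
    have h1 : HasSum (fun n => (y * (Y:ℂ)) ^ n / (Nat.factorial n : ℂ))
        (Complex.exp (y * (Y:ℂ))) := by
      rw [Complex.exp_eq_exp_ℂ]
      exact NormedSpace.expSeries_div_hasSum_exp (y * (Y:ℂ))
    have h2 : HasSum (fun n => y ^ n) ((1 - y)⁻¹) := hasSum_geometric_of_norm_lt_one hy1
    have hs1 : Summable fun n => ‖(y * (Y:ℂ)) ^ n / (Nat.factorial n : ℂ)‖ :=
      NormedSpace.norm_expSeries_div_summable (y * (Y:ℂ))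
    have hs2 : Summable fun n => ‖y ^ n‖ := by
      simp only [norm_pow]
      exact summable_geometric_of_lt_one (norm_nonneg y) hy1
    have hprod : Summable fun n => ∑ kl ∈ Finset.HasAntidiagonal.antidiagonal n,
        ((y * (Y:ℂ)) ^ kl.1 / (Nat.factorial kl.1 : ℂ)) * y ^ kl.2 :=
      (summable_norm_sum_mul_antidiagonal_of_summable_norm hs1 hs2).of_norm
    have htsum := tsum_mul_tsum_eq_tsum_sum_antidiagonal_of_summable_norm hs1 hs2
    have hE : HasSum (fun n => PC n * y ^ n)
        (Complex.exp (y * (Y:ℂ)) * (1 - y)⁻¹) := by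
      have := hprod.hasSum
      rw [← htsum, h1.tsum_eq, h2.tsum_eq] at this
      convert this using 2 with n
      rw [Finset.Nat.sum_antidiagonal_eq_sum_range_succ
        (fun i j => ((y * (Y:ℂ)) ^ i / (Nat.factorial i : ℂ)) * y ^ j) n]
      rw [hPC, Finset.sum_mul]
      apply Finset.sum_congr rfl
      intro i hi
      have hin : i ≤ n := Nat.lt_succ_iff.mp (Finset.mem_range.mp hi)
      have hyy : y ^ i * y ^ (n - i) = y ^ n := by rw [← pow_add, Nat.add_sub_cancel' hin]
      rw [mul_pow, ← hyy]
      ring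
    set E := Complex.exp (y * (Y:ℂ)) * (1 - y)⁻¹ with hEdef
    have hbsum : HasSum (fun n => b n * y ^ n) (y * E) := by
      have h3 : HasSum (fun n => b (n + 1) * y ^ (n + 1)) (y * E) := by
        have := hE.mul_left y
        convert this using 2 with n
        show PC n * y ^ (n+1) = y * (PC n * y ^ n)
        ring
        rfl
      have h4 := (hasSum_nat_add_iff (f := fun n => b n * y ^ n) 1).mp h3
      simpa [hb] using h4
    have hasum : HasSum (fun n => a n * y ^ n) (y * E - (R:ℂ) * E) := by
      have := hbsum.sub (hE.mul_left (R:ℂ))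
      convert this using 2 with n
      show a n * y ^ n = b n * y ^ n - (R:ℂ) * (PC n * y ^ n)
      rw [ha]; ring
      rfl
    convert hasum using 1
    rw [hf, hEdef]
    have h1y := hne y hy1
    field_simp
  -- radius bound for ofScalars series
  set Rnn : NNReal := ⟨R, hR0.le⟩ with hRnn
  have hRnnR : (Rnn : ℝ) = R := rfl
  have hrad : (Rnn : ENNReal) ≤ (ofScalars ℂ a).radius := by
    apply FormalMultilinearSeries.le_radius_of_summable
    have hsummable : Summable fun n => ((1 + R) * Real.exp Y) * R ^ n :=
      (summable_geometric_of_lt_one hR0.le hR1).mul_left _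
    apply Summable.of_nonneg_of_le _ _ hsummable
    · intro n; positivity
    · intro n
      rw [ofScalars_norm, hRnnR]
      apply mul_le_mul_of_nonneg_right (hanorm n) (by positivity)
  have hq : HasFPowerSeriesOnBall f (ofScalars ℂ a) 0 Rnn := by
    refine ⟨hrad, by exact_mod_cast hR0, ?_⟩
    intro y hy
    rw [EMetric.mem_ball, edist_zero_right] at hy
    have hy' : ‖y‖ < R := by
      have := ENNReal.coe_lt_coe.mp hy
      exact_mod_cast this
    simp only [ofScalars_apply_eq, smul_eq_mul, zero_add]
    exact hsum y hy'
  have hp : HasFPowerSeriesOnBall f (cauchyPowerSeries f 0 R) 0 Rnn := by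
    have := hd.hasFPowerSeriesOnBall (R := Rnn) (by exact_mod_cast hR0)
    exact this
  have heq : cauchyPowerSeries f 0 R = ofScalars ℂ a :=
    hp.hasFPowerSeriesAt.eq_formalMultilinearSeries hq.hasFPowerSeriesAt
  have hak : a (m+1) = 0 := by
    rw [ha]
    show b (m+1) - (R:ℂ) * PC (m+1) = 0
    rw [hb]
    show PC m - (R:ℂ) * PC (m+1) = 0
    rw [hPCcast, hPCcast]
    exact hRHS
  have hcoeff : cauchyPowerSeries f 0 R (m+1) (fun _ => (1:ℂ)) = 0 := by
    rw [heq, ofScalars_apply_eq, hak]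
    simp
  rw [cauchyPowerSeries_apply] at hcoeff
  have hintegrand : ∀ z : ℂ,
      ((1:ℂ) / (z - 0)) ^ (m+1) • (z - 0)⁻¹ • f z
        = (z - (R:ℂ)) * Complex.exp (z * (Y:ℂ)) / ((1 - z) * z ^ (m+1+1)) := by
    intro z
    simp only [sub_zero, smul_eq_mul, hf]
    rcases eq_or_ne z 0 with rfl | hz
    · simp
    · rw [div_mul_eq_div_div]
      ring
  simp only [hintegrand] at hcoeff
  rw [smul_eq_mul] at hcoeff
  rw [one_div]
  exact hcoeff
end
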